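/- arXiv:2205.12510 — 9 statements merged into one kernel-verified Lean document; each statement's English description precedes it below -/
import Mathlib

section
/- Suppose in addition that for every γ ∈ [0, ∞) the infimum defining L(γ) is attained by some w ∈ ℝⁿ. Then L(γ) = inf_{w∈ℝⁿ} (ℓ₀(w) + γ‖w‖²) is continuous on [0, ∞); in particular, an L²-regularized loss has no zeroth-order phase transition in the regularization strength for any finite-dimensional parameter space. -/
/-!
As a function of `γ`, the regularized loss is the lower envelope of the affine nondecreasing
functions `γ ↦ ℓ₀ w + γ ‖w‖²`, and it is finite for `γ ≥ 0` because `ℓ₀` is bounded below.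
Hence it is concave, and so continuous on `(0, ∞)`, and upper semicontinuous as an infimum of
continuous functions. At `γ = 0` the missing lower semicontinuity comes from monotonicity.
-/

open Set

theorem ConcaveOn.ciInf {𝕜 E ι : Type*} [Semiring 𝕜] [PartialOrder 𝕜] [AddCommMonoid E]
    [SMul 𝕜 E] [SMul 𝕜 ℝ] [PosSMulMono 𝕜 ℝ] [Nonempty ι] {s : Set E} {f : ι → E → ℝ}
    (hs : Convex 𝕜 s) (hf : ∀ i, ConcaveOn 𝕜 s (f i))
    (hbdd : ∀ x ∈ s, BddBelow (range fun i => f i x)) :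
    ConcaveOn 𝕜 s fun x => ⨅ i, f i x := by
  refine ⟨hs, fun x hx y hy p q hp hq hpq => le_ciInf fun i => ?_⟩
  calc p • (⨅ i, f i x) + q • (⨅ i, f i y) ≤ p • f i x + q • f i y := by
        gcongr
        · exact ciInf_le (hbdd x hx) i
        · exact ciInf_le (hbdd y hy) i
    _ ≤ f i (p • x + q • y) := (hf i).2 hx hy hp hq hpq

theorem MonotoneOn.continuousWithinAt_Ici {α β : Type*} [TopologicalSpace α] [Preorder α]
    [TopologicalSpace β] [LinearOrder β] [OrderTopology β] {f : α → β} {a : α}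
    (hmono : MonotoneOn f (Ici a)) (husc : UpperSemicontinuousWithinAt f (Ici a) a) :
    ContinuousWithinAt f (Ici a) a := by
  refine continuousWithinAt_iff_lower_upperSemicontinuousWithinAt.mpr ⟨?_, husc⟩
  exact fun _ hy => eventually_nhdsWithin_of_forall fun _ hx =>
    hy.trans_le (hmono self_mem_Ici hx hx)

section AffineFamily

variable {ι : Type*} {a b : ι → ℝ}

theorem bddBelow_range_add_mul (ha : BddBelow (range a)) (hb : ∀ i, 0 ≤ b i) {γ : ℝ}
    (hγ : 0 ≤ γ) : BddBelow (range fun i => a i + γ * b i) := by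
  obtain ⟨m, hm⟩ := ha
  exact ⟨m, forall_mem_range.mpr fun i =>
    le_add_of_le_of_nonneg (hm (mem_range_self i)) (mul_nonneg hγ (hb i))⟩

theorem concaveOn_ciInf_add_mul [Nonempty ι] (ha : BddBelow (range a)) (hb : ∀ i, 0 ≤ b i) :
    ConcaveOn ℝ (Ici 0) fun γ : ℝ => ⨅ i, a i + γ * b i := by
  refine ConcaveOn.ciInf (convex_Ici 0) (fun i => ?_)
    (fun _ hγ => bddBelow_range_add_mul ha hb hγ)
  refine ⟨convex_Ici 0, fun x _ y _ p q _ _ hpq => le_of_eq ?_⟩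
  simp only [smul_eq_mul]
  linear_combination a i * hpq

theorem monotoneOn_ciInf_add_mul (ha : BddBelow (range a)) (hb : ∀ i, 0 ≤ b i) :
    MonotoneOn (fun γ : ℝ => ⨅ i, a i + γ * b i) (Ici 0) :=
  fun _ hγ _ _ hγγ' => ciInf_mono (bddBelow_range_add_mul ha hb hγ) fun i =>
    add_le_add_right (mul_le_mul_of_nonneg_right hγγ' (hb i)) (a i)

theorem upperSemicontinuousOn_ciInf_add_mul (ha : BddBelow (range a)) (hb : ∀ i, 0 ≤ b i) :
    UpperSemicontinuousOn (fun γ : ℝ => ⨅ i, a i + γ * b i) (Ici 0) :=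
  upperSemicontinuousOn_ciInf (fun _ hγ => bddBelow_range_add_mul ha hb hγ) fun _ =>
    (continuous_const.add (continuous_id.mul continuous_const)).upperSemicontinuous
      |>.upperSemicontinuousOn _

theorem continuousOn_ciInf_add_mul [Nonempty ι] (ha : BddBelow (range a))
    (hb : ∀ i, 0 ≤ b i) : ContinuousOn (fun γ : ℝ => ⨅ i, a i + γ * b i) (Ici 0) :=
  (concaveOn_ciInf_add_mul ha hb).continuousOn_Ici <|
    (monotoneOn_ciInf_add_mul ha hb).continuousWithinAt_Ici
      (upperSemicontinuousOn_ciInf_add_mul ha hb 0 self_mem_Ici)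

end AffineFamily

theorem regularized_loss_continuous_general {n : ℕ}
    (ℓ₀ : (Fin n → ℝ) → ℝ) (hbdd : BddBelow (Set.range ℓ₀)) :
    ContinuousOn (fun γ : ℝ => ⨅ w : Fin n → ℝ, (ℓ₀ w + γ * ∑ i, (w i) ^ 2))
      (Set.Ici 0) :=
  continuousOn_ciInf_add_mul hbdd fun w => Finset.sum_nonneg fun i _ => sq_nonneg (w i)

/-- If for every γ ≥ 0 the infimum defining L(γ) = inf_w (ℓ₀(w) + γ‖w‖²)
is attained, then L is continuous on [0, ∞): no zeroth-order phase transition in the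
regularization strength. -/
theorem regularized_loss_continuous {n : ℕ}
    (ℓ₀ : (Fin n → ℝ) → ℝ) (hbdd : BddBelow (Set.range ℓ₀))
    (hatt : ∀ γ : ℝ, 0 ≤ γ → ∃ w : Fin n → ℝ,
      ∀ w' : Fin n → ℝ, ℓ₀ w + γ * ∑ i, (w i) ^ 2 ≤ ℓ₀ w' + γ * ∑ i, (w' i) ^ 2) :
    ContinuousOn (fun γ : ℝ => ⨅ w : Fin n → ℝ, (ℓ₀ w + γ * ∑ i, (w i) ^ 2))
      (Set.Ici 0) :=
  regularized_loss_continuous_general ℓ₀ hbdd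
end

section
/- Let γ₀ > 0 and suppose b : (γ₀−ε, γ₀+ε) → ℝ is differentiable with b(γ) a global minimizer of ℓ̄_D(·, γ) for every γ in this interval. Then γ ↦ ℓ̄_D(b(γ), γ) is differentiable at γ₀ with derivative equal to Σ_{i=1}^n d₀^{2D} b(γ₀)^{2D} v_i² / (d₀^D (σ²+d₀)^D a_i b(γ₀)^{2D} + γ₀)² + D d₀² b(γ₀)², which is nonnegative. -/
/-- The depth-`D` effective loss
ℓ̄_D(b, γ) = −Σᵢ d₀^{2D} b^{2D} vᵢ² / (d₀^D (σ²+d₀)^D aᵢ b^{2D} + γ) + c + γ D d₀² b². -/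
noncomputable def effLoss {n : ℕ} (d₀ : ℕ) (σ : ℝ) (v a : Fin n → ℝ) (c : ℝ)
    (D : ℕ) (b γ : ℝ) : ℝ :=
  -∑ i, (d₀ : ℝ) ^ (2 * D) * b ^ (2 * D) * (v i) ^ 2 /
      ((d₀ : ℝ) ^ D * (σ ^ 2 + (d₀ : ℝ)) ^ D * a i * b ^ (2 * D) + γ)
    + c + γ * (D : ℝ) * (d₀ : ℝ) ^ 2 * b ^ 2

/-! Envelope theorem: by the chain rule the derivative of `γ ↦ ℓ̄_D(b(γ), γ)` at `γ₀` is
`∂_b ℓ̄_D · b'(γ₀) + ∂_γ ℓ̄_D`, and `∂_b ℓ̄_D` vanishes at the minimizer `b(γ₀)` by Fermat's rule.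
For `γ > 0` and `aᵢ ≥ 0` all denominators are positive, so `ℓ̄_D` is jointly differentiable there,
and `∂_γ ℓ̄_D` is a sum of nonnegative terms. -/

theorem HasFDerivAt.hasDerivAt_comp_of_isLocalMin {E : Type*} [NormedAddCommGroup E]
    [NormedSpace ℝ E] {F : E × ℝ → ℝ} {L : E × ℝ →L[ℝ] ℝ} {b : ℝ → E} {γ₀ S : ℝ}
    (hF : HasFDerivAt F L (b γ₀, γ₀)) (hb : DifferentiableAt ℝ b γ₀)
    (hmin : IsLocalMin (fun x => F (x, γ₀)) (b γ₀))
    (hS : HasDerivAt (fun γ => F (b γ₀, γ)) S γ₀) :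
    HasDerivAt (fun γ => F (b γ, γ)) S γ₀ := by
  have hinl : L.comp (.inl ℝ E ℝ) = 0 :=
    hmin.hasFDerivAt_eq_zero (hF.comp (b γ₀) (hasFDerivAt_prodMk_left (b γ₀) γ₀))
  have hinr : L (0, 1) = S :=
    (hF.comp_hasDerivAt γ₀ ((hasDerivAt_const γ₀ (b γ₀)).prodMk (hasDerivAt_id γ₀))).unique hS
  have hcurve : HasDerivAt (fun γ => F (b γ, γ)) (L (deriv b γ₀, 1)) γ₀ :=
    hF.comp_hasDerivAt_of_eq γ₀ (hb.hasDerivAt.prodMk (hasDerivAt_id γ₀)) rfl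
  have hsplit : L (deriv b γ₀, 1) = L.comp (.inl ℝ E ℝ) (deriv b γ₀) + L (0, 1) := by
    simp [← map_add]
  rwa [hsplit, hinl, hinr, zero_apply, zero_add] at hcurve

theorem hasDerivAt_div_const_add {K A γ : ℝ} (h : A + γ ≠ 0) :
    HasDerivAt (fun x => K / (A + x)) (-(K / (A + γ) ^ 2)) γ := by
  simpa [div_eq_mul_inv] using (((hasDerivAt_id γ).const_add A).inv h).const_mul K

section EffLoss

variable {n : ℕ} (d₀ : ℕ) (σ : ℝ) (v a : Fin n → ℝ) (c : ℝ) (D : ℕ)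

noncomputable def effLossPartialGamma (b γ : ℝ) : ℝ :=
  ∑ i, (d₀ : ℝ) ^ (2 * D) * b ^ (2 * D) * (v i) ^ 2 /
      ((d₀ : ℝ) ^ D * (σ ^ 2 + (d₀ : ℝ)) ^ D * a i * b ^ (2 * D) + γ) ^ 2
    + (D : ℝ) * (d₀ : ℝ) ^ 2 * b ^ 2

theorem effLossPartialGamma_nonneg (b γ : ℝ) : 0 ≤ effLossPartialGamma d₀ σ v a D b γ := by
  have := (even_two_mul D).pow_nonneg b
  unfold effLossPartialGamma
  positivity

variable {a} (ha : ∀ i, 0 ≤ a i) {γ : ℝ} (hγ : 0 < γ)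
include ha hγ

theorem effLoss_denom_pos (b : ℝ) (i : Fin n) :
    0 < (d₀ : ℝ) ^ D * (σ ^ 2 + (d₀ : ℝ)) ^ D * a i * b ^ (2 * D) + γ := by
  have := ha i
  have := (even_two_mul D).pow_nonneg b
  positivity

theorem differentiableAt_effLoss_uncurry (b : ℝ) :
    DifferentiableAt ℝ (fun p : ℝ × ℝ => effLoss d₀ σ v a c D p.1 p.2) (b, γ) := by
  unfold effLoss
  fun_prop (disch := exact (effLoss_denom_pos d₀ σ D ha hγ _ _).ne')

theorem hasDerivAt_effLoss_right (b : ℝ) :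
    HasDerivAt (effLoss d₀ σ v a c D b) (effLossPartialGamma d₀ σ v a D b γ) γ := by
  have hsum := HasDerivAt.fun_sum (u := Finset.univ) fun i _ =>
    hasDerivAt_div_const_add (K := (d₀ : ℝ) ^ (2 * D) * b ^ (2 * D) * (v i) ^ 2)
      (effLoss_denom_pos d₀ σ D ha hγ b i).ne'
  have hlin := (((hasDerivAt_id γ).mul_const (D : ℝ)).mul_const ((d₀ : ℝ) ^ 2)).mul_const (b ^ 2)
  refine ((hsum.neg.add_const c).add hlin).congr_deriv ?_
  simp [effLossPartialGamma, Finset.sum_neg_distrib]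

end EffLoss

theorem effLoss_envelope_derivative_general {n : ℕ} (d₀ : ℕ) (σ : ℝ)
    (v a : Fin n → ℝ) (ha : ∀ i, 0 ≤ a i) (c : ℝ) (D : ℕ)
    (γ₀ ε : ℝ) (hγ₀ : 0 < γ₀) (hε : 0 < ε)
    (b : ℝ → ℝ)
    (hdiff : ∀ γ ∈ Set.Ioo (γ₀ - ε) (γ₀ + ε), DifferentiableAt ℝ b γ)
    (hmin : ∀ γ ∈ Set.Ioo (γ₀ - ε) (γ₀ + ε), ∀ b' : ℝ,
      effLoss d₀ σ v a c D (b γ) γ ≤ effLoss d₀ σ v a c D b' γ) :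
    HasDerivAt (fun γ => effLoss d₀ σ v a c D (b γ) γ)
      (∑ i, (d₀ : ℝ) ^ (2 * D) * (b γ₀) ^ (2 * D) * (v i) ^ 2 /
          ((d₀ : ℝ) ^ D * (σ ^ 2 + (d₀ : ℝ)) ^ D * a i * (b γ₀) ^ (2 * D) + γ₀) ^ 2
        + (D : ℝ) * (d₀ : ℝ) ^ 2 * (b γ₀) ^ 2) γ₀ ∧
    0 ≤ ∑ i, (d₀ : ℝ) ^ (2 * D) * (b γ₀) ^ (2 * D) * (v i) ^ 2 /
          ((d₀ : ℝ) ^ D * (σ ^ 2 + (d₀ : ℝ)) ^ D * a i * (b γ₀) ^ (2 * D) + γ₀) ^ 2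
        + (D : ℝ) * (d₀ : ℝ) ^ 2 * (b γ₀) ^ 2 := by
  have hγ₀mem : γ₀ ∈ Set.Ioo (γ₀ - ε) (γ₀ + ε) := ⟨by linarith, by linarith⟩
  have hlocmin : IsLocalMin (fun x => effLoss d₀ σ v a c D x γ₀) (b γ₀) :=
    .of_forall (hmin γ₀ hγ₀mem)
  refine ⟨?_, effLossPartialGamma_nonneg d₀ σ v a D (b γ₀) γ₀⟩
  exact (differentiableAt_effLoss_uncurry d₀ σ v c D ha hγ₀ (b γ₀)).hasFDerivAt
    |>.hasDerivAt_comp_of_isLocalMin (hdiff γ₀ hγ₀mem) hlocmin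
      (hasDerivAt_effLoss_right d₀ σ v c D ha hγ₀ (b γ₀))

/-- if b(γ) is a differentiable curve of global minimizers of the depth-D
effective loss near γ₀ > 0, then γ ↦ ℓ̄_D(b(γ), γ) is differentiable at γ₀ with the stated
nonnegative derivative (envelope theorem / Lemma 1). -/
theorem effLoss_envelope_derivative {n : ℕ} (d₀ : ℕ) (hd₀ : 0 < d₀) (σ : ℝ) (hσ : 0 ≤ σ)
    (v a : Fin n → ℝ) (ha : ∀ i, 0 ≤ a i) (c : ℝ) (D : ℕ) (hD : 1 ≤ D)
    (γ₀ ε : ℝ) (hγ₀ : 0 < γ₀) (hε : 0 < ε)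
    (b : ℝ → ℝ)
    (hdiff : ∀ γ ∈ Set.Ioo (γ₀ - ε) (γ₀ + ε), DifferentiableAt ℝ b γ)
    (hmin : ∀ γ ∈ Set.Ioo (γ₀ - ε) (γ₀ + ε), ∀ b' : ℝ,
      effLoss d₀ σ v a c D (b γ) γ ≤ effLoss d₀ σ v a c D b' γ) :
    HasDerivAt (fun γ => effLoss d₀ σ v a c D (b γ) γ)
      (∑ i, (d₀ : ℝ) ^ (2 * D) * (b γ₀) ^ (2 * D) * (v i) ^ 2 /
          ((d₀ : ℝ) ^ D * (σ ^ 2 + (d₀ : ℝ)) ^ D * a i * (b γ₀) ^ (2 * D) + γ₀) ^ 2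
        + (D : ℝ) * (d₀ : ℝ) ^ 2 * (b γ₀) ^ 2) γ₀ ∧
    0 ≤ ∑ i, (d₀ : ℝ) ^ (2 * D) * (b γ₀) ^ (2 * D) * (v i) ^ 2 /
          ((d₀ : ℝ) ^ D * (σ ^ 2 + (d₀ : ℝ)) ^ D * a i * (b γ₀) ^ (2 * D) + γ₀) ^ 2
        + (D : ℝ) * (d₀ : ℝ) ^ 2 * (b γ₀) ^ 2 :=
  effLoss_envelope_derivative_general d₀ σ v a ha c D γ₀ ε hγ₀ hε b hdiff hmin
end

section
/- If γ ≥ ‖v‖, then ℓ̄(b, γ) ≥ c for every b ∈ ℝ, so that L(γ) = c; moreover, if γ > ‖v‖, then ℓ̄(b, γ) > c for every b ≠ 0, so b = 0 is the unique global minimizer of ℓ̄(·, γ). That is, for γ ≥ ‖v‖ the depth-1 model is in the trivial phase. -/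
/-!
Writing `M = b²(σ² + d₁) A₀ + γ I`, one has `ℓ̄(b, γ) - c = d₁ b² (γ - vᵀ M⁻¹ v)`. Since `M ≥ γ I`,
the vector `w = M⁻¹ v` satisfies `γ ‖w‖² ≤ ⟪v, w⟫`; together with `0 ≤ ‖γ w - v‖²` this gives
`γ vᵀ M⁻¹ v ≤ ‖v‖²`, hence `γ (ℓ̄(b, γ) - c) ≥ d₁ b² (γ² - ‖v‖²)`, which is `≥ 0` for `γ ≥ ‖v‖` and
`> 0` for `γ > ‖v‖`, `b ≠ 0`.
-/

open Matrix

/-- The depth-1 effective loss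
ℓ̄(b, γ) = −d₁ b² vᵀ (b²(σ²+d₁)A₀ + γI)⁻¹ v + c + γ d₁ b². -/
noncomputable def effLoss1 {n : ℕ} (A₀ : Matrix (Fin n) (Fin n) ℝ) (v : Fin n → ℝ)
    (c : ℝ) (d₁ : ℕ) (σ : ℝ) (b γ : ℝ) : ℝ :=
  -(d₁ : ℝ) * b ^ 2 *
      (v ⬝ᵥ (((b ^ 2 * (σ ^ 2 + (d₁ : ℝ))) • A₀ + γ • (1 : Matrix (Fin n) (Fin n) ℝ))⁻¹.mulVec v))
    + c + γ * (d₁ : ℝ) * b ^ 2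

namespace Matrix

variable {ι : Type*} [Fintype ι] [DecidableEq ι]

theorem mul_dotProduct_inv_mulVec_le {M : Matrix ι ι ℝ} (hM : IsUnit M) {γ : ℝ} (hγ : 0 ≤ γ)
    (hcoer : ∀ x, γ * (x ⬝ᵥ x) ≤ x ⬝ᵥ M *ᵥ x) (v : ι → ℝ) :
    γ * (v ⬝ᵥ M⁻¹ *ᵥ v) ≤ v ⬝ᵥ v := by
  set w := M⁻¹ *ᵥ v
  have hMw : M *ᵥ w = v := by
    rw [mulVec_mulVec, mul_nonsing_inv M ((isUnit_iff_isUnit_det M).mp hM), one_mulVec]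
  have hw : γ * (w ⬝ᵥ w) ≤ v ⬝ᵥ w := by
    simpa only [hMw, dotProduct_comm w v] using hcoer w
  have hsq : 0 ≤ (γ • w - v) ⬝ᵥ (γ • w - v) := dotProduct_self_star_nonneg _
  simp only [sub_dotProduct, dotProduct_sub, smul_dotProduct, dotProduct_smul, smul_eq_mul,
    dotProduct_comm w v] at hsq
  nlinarith [mul_le_mul_of_nonneg_left hw hγ]

theorem PosSemidef.mul_dotProduct_self_le_add_smul_one {P : Matrix ι ι ℝ} (hP : P.PosSemidef) (γ : ℝ)
    (x : ι → ℝ) : γ * (x ⬝ᵥ x) ≤ x ⬝ᵥ (P + γ • 1) *ᵥ x := by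
  have := hP.dotProduct_mulVec_nonneg x
  simp only [star_trivial] at this
  rw [add_mulVec, dotProduct_add, smul_mulVec, one_mulVec, dotProduct_smul, smul_eq_mul]
  linarith

theorem PosSemidef.mul_dotProduct_inv_add_smul_one_le {P : Matrix ι ι ℝ} (hP : P.PosSemidef)
    {γ : ℝ} (hγ : 0 < γ) (v : ι → ℝ) :
    γ * (v ⬝ᵥ (P + γ • 1)⁻¹ *ᵥ v) ≤ v ⬝ᵥ v :=
  mul_dotProduct_inv_mulVec_le (PosDef.posSemidef_add hP (PosDef.one.smul hγ)).isUnit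
    hγ.le (hP.mul_dotProduct_self_le_add_smul_one γ) v

end Matrix

theorem effLoss1_zero {n : ℕ} (A₀ : Matrix (Fin n) (Fin n) ℝ) (v : Fin n → ℝ) (c : ℝ) (d₁ : ℕ)
    (σ γ : ℝ) : effLoss1 A₀ v c d₁ σ 0 γ = c := by
  simp [effLoss1]

theorem mul_sq_mul_le_mul_effLoss1_sub {n : ℕ} {A₀ : Matrix (Fin n) (Fin n) ℝ}
    (hA : A₀.PosSemidef) (v : Fin n → ℝ) (c : ℝ) (d₁ : ℕ) (σ : ℝ) {γ : ℝ} (hγ : 0 < γ) (b : ℝ) :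
    d₁ * b ^ 2 * (γ ^ 2 - v ⬝ᵥ v) ≤ γ * (effLoss1 A₀ v c d₁ σ b γ - c) := by
  have hS : 0 ≤ b ^ 2 * (σ ^ 2 + d₁) := by positivity
  have hq := (hA.smul hS).mul_dotProduct_inv_add_smul_one_le hγ v
  have hgap : effLoss1 A₀ v c d₁ σ b γ - c =
      d₁ * b ^ 2 * (γ - v ⬝ᵥ ((b ^ 2 * (σ ^ 2 + d₁)) • A₀ + γ • 1)⁻¹ *ᵥ v) := by
    unfold effLoss1
    ring
  rw [hgap]
  have hb : (0 : ℝ) ≤ d₁ * b ^ 2 := by positivity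
  nlinarith [mul_le_mul_of_nonneg_left hq hb]

theorem depth_one_trivial_phase_general {n : ℕ}
    (A₀ : Matrix (Fin n) (Fin n) ℝ) (hA : A₀.PosSemidef)
    (v : Fin n → ℝ) (c : ℝ) (d₁ : ℕ) (hd₁ : 0 < d₁) (σ : ℝ)
    (γ : ℝ) (hγ : 0 < γ) (hγv : Real.sqrt (v ⬝ᵥ v) ≤ γ) :
    (∀ b : ℝ, c ≤ effLoss1 A₀ v c d₁ σ b γ) ∧
    (⨅ b : ℝ, effLoss1 A₀ v c d₁ σ b γ) = c ∧
    (Real.sqrt (v ⬝ᵥ v) < γ → ∀ b : ℝ, b ≠ 0 → c < effLoss1 A₀ v c d₁ σ b γ) := by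
  have hV : v ⬝ᵥ v ≤ γ ^ 2 := (Real.sqrt_le_left hγ.le).mp hγv
  have hge : ∀ b : ℝ, c ≤ effLoss1 A₀ v c d₁ σ b γ := fun b => by
    have := mul_sq_mul_le_mul_effLoss1_sub hA v c d₁ σ hγ b
    have : 0 ≤ γ * (effLoss1 A₀ v c d₁ σ b γ - c) :=
      le_trans (mul_nonneg (by positivity) (sub_nonneg.mpr hV)) this
    linarith [nonneg_of_mul_nonneg_right this hγ]
  refine ⟨hge, ?_, fun hlt b hb => ?_⟩
  · refine le_antisymm ?_ (le_ciInf hge)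
    exact (ciInf_le ⟨c, Set.forall_mem_range.2 hge⟩ 0).trans_eq (effLoss1_zero A₀ v c d₁ σ γ)
  · have hV' : 0 < γ ^ 2 - v ⬝ᵥ v := sub_pos.mpr ((Real.sqrt_lt' hγ).mp hlt)
    have := mul_sq_mul_le_mul_effLoss1_sub hA v c d₁ σ hγ b
    have : 0 < γ * (effLoss1 A₀ v c d₁ σ b γ - c) := lt_of_lt_of_le (mul_pos (by positivity) hV') this
    linarith [pos_of_mul_pos_right this hγ.le]

/-- if γ ≥ ‖v‖ then ℓ̄(b, γ) ≥ c for all b, so L(γ) = c; and if γ > ‖v‖,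
then ℓ̄(b, γ) > c for all b ≠ 0, so b = 0 is the unique global minimizer (trivial phase). -/
theorem depth_one_trivial_phase {n : ℕ} (hn : 1 ≤ n)
    (A₀ : Matrix (Fin n) (Fin n) ℝ) (hA : A₀.PosSemidef)
    (v : Fin n → ℝ) (c : ℝ) (d₁ : ℕ) (hd₁ : 0 < d₁) (σ : ℝ) (hσ : 0 ≤ σ)
    (γ : ℝ) (hγ : 0 < γ) (hγv : Real.sqrt (v ⬝ᵥ v) ≤ γ) :
    (∀ b : ℝ, c ≤ effLoss1 A₀ v c d₁ σ b γ) ∧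
    (⨅ b : ℝ, effLoss1 A₀ v c d₁ σ b γ) = c ∧
    (Real.sqrt (v ⬝ᵥ v) < γ → ∀ b : ℝ, b ≠ 0 → c < effLoss1 A₀ v c d₁ σ b γ) :=
  depth_one_trivial_phase_general A₀ hA v c d₁ hd₁ σ γ hγ hγv
end

section
/- Suppose v ≠ 0 and vᵀA₀v > 0. For each γ with 0 < γ < ‖v‖, let b_*(γ) ≥ 0 be any global minimizer of ℓ̄(·, γ). Then as γ → ‖v‖ from the left, b_*(γ)² / (‖v‖ − γ) converges to ‖v‖² / ((σ² + d₁) vᵀA₀v); in particular, the order parameter vanishes at the critical point with the Landau critical exponent 1/2, b_*(γ) ∼ (‖v‖ − γ)^{1/2}. -/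
/-!
With `t = b²` and `m = σ² + d₁` the loss is `c + d₁ · t (γ - vᵀ (t m A₀ + γ)⁻¹ v)`. Writing
`y = (s A₀ + γ)⁻¹ v`, the identities `vᵀv - γ vᵀy = s vᵀA₀y`, `vᵀA₀v - γ vᵀA₀y = s (A₀v)ᵀA₀y` and
`‖A₀v‖² - γ (A₀v)ᵀA₀y = s (A₀v)ᵀA₀²y`, whose right-hand sides are `≥ 0`, expand the resolvent to
first and second order in `s = t m`. Hence, with `ε = (‖v‖² - γ²)/γ`, the reduced loss is squeezed
between the parabola `a t² - ε t`, `a = m vᵀA₀v / γ²`, and the same parabola minus `O(t³)`, and a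
Cauchy–Schwarz bound shows that it is nonnegative beyond `t = 2ε/a`. So the minimiser `b_*²` lies
within `O(ε^{3/2})` of the vertex `ε/(2a) = (‖v‖ - γ)(‖v‖ + γ) γ / (2 m vᵀA₀v)`, and
`ε ~ 2 (‖v‖ - γ)` as `γ → ‖v‖`.
-/

open Matrix

open Filter Topology Set

theorem Filter.Tendsto.of_sq_sub_le {α : Type*} {l : Filter α} {f h F : α → ℝ} {L : ℝ}
    (hh : Tendsto h l (𝓝 L)) (hF : Tendsto F l (𝓝 0))
    (hle : ∀ᶠ x in l, (f x - h x) ^ 2 ≤ F x) : Tendsto f l (𝓝 L) := by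
  have hsub : Tendsto (fun x => f x - h x) l (𝓝 0) := by
    refine squeeze_zero_norm' (hle.mono fun x hx => ?_) (by simpa using hF.sqrt)
    rw [Real.norm_eq_abs, ← Real.sqrt_sq_eq_abs]
    exact Real.sqrt_le_sqrt hx
  simpa using hsub.add hh

theorem IsMinOn.sq_sub_le_of_cubic_bounds {g : ℝ → ℝ} {a t₀ κ t₁ : ℝ} (ha : 0 < a)
    (ht₀ : 0 < t₀) (hκ : 0 ≤ κ) (ht₁ : 0 ≤ t₁) (hmin : IsMinOn g (Ici 0) t₁)
    (hup : ∀ t, 0 ≤ t → g t ≤ a * t * (t - 2 * t₀))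
    (hlow : ∀ t, 0 ≤ t → a * t * (t - 2 * t₀) - κ * t ^ 3 ≤ g t)
    (hnonneg : ∀ t, 4 * t₀ ≤ t → 0 ≤ g t) :
    a * (t₁ - t₀) ^ 2 ≤ 64 * κ * t₀ ^ 3 := by
  have hneg : g t₁ ≤ -(a * t₀ ^ 2) := by
    have hle : g t₁ ≤ g t₀ := hmin (mem_Ici.mpr ht₀.le)
    nlinarith [hup t₀ ht₀.le]
  have hlt : t₁ < 4 * t₀ := by
    by_contra! h
    nlinarith [hnonneg t₁ h, mul_pos ha (pow_pos ht₀ 2)]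
  have hcube : t₁ ^ 3 ≤ (4 * t₀) ^ 3 := pow_le_pow_left₀ ht₁ hlt.le 3
  nlinarith [hlow t₁ ht₁, mul_le_mul_of_nonneg_left hcube hκ]

namespace Matrix

variable {ι : Type*} [Fintype ι]

theorem IsSymm.dotProduct_mulVec_eq {A : Matrix ι ι ℝ} (hA : A.IsSymm) (x y : ι → ℝ) :
    x ⬝ᵥ A *ᵥ y = A *ᵥ x ⬝ᵥ y := by
  rw [dotProduct_mulVec, ← mulVec_transpose, hA.eq]

theorem PosSemidef.dotProduct_mulVec_sq_le {B : Matrix ι ι ℝ} (hB : B.PosSemidef)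
    (x y : ι → ℝ) : (x ⬝ᵥ B *ᵥ y) ^ 2 ≤ (x ⬝ᵥ B *ᵥ x) * (y ⬝ᵥ B *ᵥ y) := by
  classical
  have hsymm : y ⬝ᵥ B *ᵥ x = x ⬝ᵥ B *ᵥ y := by
    rw [(isHermitian_iff_isSymm.mp hB.isHermitian).dotProduct_mulVec_eq, dotProduct_comm]
  have h := B.toBilin'.apply_mul_apply_le_of_forall_zero_le
    (fun x => by simpa [toBilin'_apply'] using hB.dotProduct_mulVec_nonneg x) x y
  rwa [toBilin'_apply', toBilin'_apply', toBilin'_apply', toBilin'_apply', hsymm, ← sq] at h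

end Matrix

section ShiftedSystem

variable {ι : Type*} [Fintype ι]

/-- `y = (s • A + γ • 1)⁻¹ *ᵥ v`, stated without the inverse. -/
def IsShiftedSolution (A : Matrix ι ι ℝ) (s γ : ℝ) (y v : ι → ℝ) : Prop :=
  s • (A *ᵥ y) + γ • y = v

namespace IsShiftedSolution

variable {A : Matrix ι ι ℝ} {s γ : ℝ} {y v : ι → ℝ}

theorem dotProduct_sub_eq (hy : IsShiftedSolution A s γ y v) (u : ι → ℝ) :
    u ⬝ᵥ v - γ * (u ⬝ᵥ y) = s * (u ⬝ᵥ A *ᵥ y) := by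
  rw [← hy, dotProduct_add, dotProduct_smul, dotProduct_smul, smul_eq_mul, smul_eq_mul]
  ring

theorem mulVec (hy : IsShiftedSolution A s γ y v) :
    IsShiftedSolution A s γ (A *ᵥ y) (A *ᵥ v) := by
  rw [IsShiftedSolution, ← hy, mulVec_add, mulVec_smul, mulVec_smul]

theorem dotProduct_mulVec_sub_eq (hy : IsShiftedSolution A s γ y v) (hA : A.IsSymm) :
    v ⬝ᵥ A *ᵥ v - γ * (v ⬝ᵥ A *ᵥ y) = s * (A *ᵥ v ⬝ᵥ A *ᵥ y) := by
  rw [hA.dotProduct_mulVec_eq v v, hA.dotProduct_mulVec_eq v y]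
  exact hy.dotProduct_sub_eq (A *ᵥ v)

variable (hA : A.PosSemidef) (hs : 0 ≤ s) (hγ : 0 ≤ γ)
include hA hs hγ

theorem dotProduct_nonneg (hy : IsShiftedSolution A s γ y v) : 0 ≤ v ⬝ᵥ y := by
  have hAy : 0 ≤ y ⬝ᵥ A *ᵥ y := by simpa using hA.dotProduct_mulVec_nonneg y
  have hyy : 0 ≤ y ⬝ᵥ y := by simpa using dotProduct_self_star_nonneg y
  rw [← hy, add_dotProduct, smul_dotProduct, smul_dotProduct, smul_eq_mul, smul_eq_mul,
    dotProduct_comm]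
  positivity

theorem dotProduct_mulVec_nonneg (hy : IsShiftedSolution A s γ y v) : 0 ≤ v ⬝ᵥ A *ᵥ y := by
  have hAy : 0 ≤ y ⬝ᵥ A *ᵥ y := by simpa using hA.dotProduct_mulVec_nonneg y
  have hAyAy : 0 ≤ A *ᵥ y ⬝ᵥ A *ᵥ y := by simpa using dotProduct_self_star_nonneg (A *ᵥ y)
  rw [← hy, add_dotProduct, smul_dotProduct, smul_dotProduct, smul_eq_mul, smul_eq_mul]
  positivity

theorem mul_dotProduct_sub_le (hy : IsShiftedSolution A s γ y v) :
    γ * (v ⬝ᵥ v - γ * (v ⬝ᵥ y)) ≤ s * (v ⬝ᵥ A *ᵥ v) := by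
  have hgap := hy.dotProduct_sub_eq v
  have hS1 := hy.dotProduct_mulVec_sub_eq (isHermitian_iff_isSymm.mp hA.isHermitian)
  have hb := hy.mulVec.dotProduct_nonneg hA hs hγ
  rw [hgap]
  nlinarith [mul_nonneg (mul_nonneg hs hs) hb]

theorem le_sq_mul_dotProduct_sub (hy : IsShiftedSolution A s γ y v) :
    s * γ * (v ⬝ᵥ A *ᵥ v) - s ^ 2 * (A *ᵥ v ⬝ᵥ A *ᵥ v) ≤
      γ ^ 2 * (v ⬝ᵥ v - γ * (v ⬝ᵥ y)) := by
  have hgap := hy.dotProduct_sub_eq v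
  have hS1 := hy.dotProduct_mulVec_sub_eq (isHermitian_iff_isSymm.mp hA.isHermitian)
  have hS2 := hy.mulVec.dotProduct_sub_eq (A *ᵥ v)
  have hc := hy.mulVec.dotProduct_mulVec_nonneg hA hs hγ
  have key : γ ^ 2 * (v ⬝ᵥ v - γ * (v ⬝ᵥ y)) -
      (s * γ * (v ⬝ᵥ A *ᵥ v) - s ^ 2 * (A *ᵥ v ⬝ᵥ A *ᵥ v)) =
      s ^ 3 * (A *ᵥ v ⬝ᵥ A *ᵥ (A *ᵥ y)) := by
    linear_combination γ ^ 2 * hgap - s * γ * hS1 + s ^ 2 * hS2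
  nlinarith [mul_nonneg (pow_nonneg hs 3) hc]

/-- Cauchy–Schwarz for the form of `A (s A + γ) = s A² + γ A`, applied to `y` and
`v = (s A + γ) y`. -/
theorem mul_sq_le_mul_dotProduct_sub (hy : IsShiftedSolution A s γ y v) :
    s * (v ⬝ᵥ A *ᵥ v) ^ 2 ≤
      (s * (A *ᵥ v ⬝ᵥ A *ᵥ v) + γ * (v ⬝ᵥ A *ᵥ v)) * (v ⬝ᵥ v - γ * (v ⬝ᵥ y)) := by
  have hsymm := isHermitian_iff_isSymm.mp hA.isHermitian
  set B := s • (A * A) + γ • A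
  have hB : B.PosSemidef := by
    have hAA : (A * A).PosSemidef := by
      simpa [hsymm.eq] using posSemidef_conjTranspose_mul_self A
    exact (hAA.smul hs).add (hA.smul hγ)
  have hBform (x x' : ι → ℝ) :
      x ⬝ᵥ B *ᵥ x' = s * (A *ᵥ x ⬝ᵥ A *ᵥ x') + γ * (x ⬝ᵥ A *ᵥ x') := by
    simp only [B, add_mulVec, smul_mulVec, ← mulVec_mulVec, dotProduct_add,
      dotProduct_smul, smul_eq_mul, hsymm.dotProduct_mulVec_eq x (A *ᵥ x')]
  have hcs := hB.dotProduct_mulVec_sq_le v y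
  have hgap := hy.dotProduct_sub_eq v
  have hS1 := hy.dotProduct_mulVec_sub_eq hsymm
  have hyBy : y ⬝ᵥ B *ᵥ y = v ⬝ᵥ A *ᵥ y := by
    rw [hBform, ← hy, add_dotProduct, smul_dotProduct, smul_dotProduct, smul_eq_mul,
      smul_eq_mul, dotProduct_comm y]
  have hvBy : v ⬝ᵥ B *ᵥ y = v ⬝ᵥ A *ᵥ v := by rw [hBform]; linarith
  rw [hyBy, hvBy, hBform v v] at hcs
  rw [hgap]
  nlinarith [mul_le_mul_of_nonneg_left hcs hs]

end IsShiftedSolution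

end ShiftedSystem

section ReducedLoss

variable {ι : Type*} [Fintype ι] [DecidableEq ι] {A : Matrix ι ι ℝ} {v : ι → ℝ}

theorem isShiftedSolution_inv_mulVec {s γ : ℝ} (hA : A.PosSemidef) (hs : 0 ≤ s) (hγ : 0 < γ)
    (v : ι → ℝ) : IsShiftedSolution A s γ ((s • A + γ • (1 : Matrix ι ι ℝ))⁻¹ *ᵥ v) v := by
  have hM : (s • A + γ • (1 : Matrix ι ι ℝ)).PosDef :=
    PosDef.posSemidef_add (hA.smul hs) (PosDef.one.smul hγ)
  calc _ = (s • A + γ • (1 : Matrix ι ι ℝ)) *ᵥ ((s • A + γ • 1)⁻¹ *ᵥ v) := by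
        rw [add_mulVec, smul_mulVec, smul_mulVec, one_mulVec]
    _ = v := by
        rw [mulVec_mulVec, mul_nonsing_inv _ ((isUnit_iff_isUnit_det _).mp hM.isUnit),
          one_mulVec]

noncomputable def reducedLoss (A : Matrix ι ι ℝ) (v : ι → ℝ) (m γ t : ℝ) : ℝ :=
  t * (γ - v ⬝ᵥ ((t * m) • A + γ • (1 : Matrix ι ι ℝ))⁻¹ *ᵥ v)

section Bounds

variable {m γ t : ℝ} (hA : A.PosSemidef) (hm : 0 ≤ m) (hγ : 0 < γ) (ht : 0 ≤ t)
include hA hm hγ ht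

theorem sq_mul_reducedLoss_le :
    γ ^ 2 * reducedLoss A v m γ t ≤
      t * (m * (v ⬝ᵥ A *ᵥ v) * t - γ * (v ⬝ᵥ v - γ ^ 2)) := by
  have h := (isShiftedSolution_inv_mulVec hA (mul_nonneg ht hm) hγ v).mul_dotProduct_sub_le hA
    (mul_nonneg ht hm) hγ.le
  unfold reducedLoss
  nlinarith [mul_le_mul_of_nonneg_left h ht]

theorem le_cube_mul_reducedLoss :
    γ * t * (m * (v ⬝ᵥ A *ᵥ v) * t - γ * (v ⬝ᵥ v - γ ^ 2)) -
        m ^ 2 * (A *ᵥ v ⬝ᵥ A *ᵥ v) * t ^ 3 ≤ γ ^ 3 * reducedLoss A v m γ t := by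
  have h := (isShiftedSolution_inv_mulVec hA (mul_nonneg ht hm) hγ v).le_sq_mul_dotProduct_sub
    hA (mul_nonneg ht hm) hγ.le
  unfold reducedLoss
  nlinarith [mul_le_mul_of_nonneg_left h ht]

theorem reducedLoss_nonneg (hS1 : 0 < v ⬝ᵥ A *ᵥ v)
    (hsmall : 2 * (v ⬝ᵥ v - γ ^ 2) * (A *ᵥ v ⬝ᵥ A *ᵥ v) ≤ (v ⬝ᵥ A *ᵥ v) ^ 2)
    (hlarge : 2 * γ * (v ⬝ᵥ v - γ ^ 2) ≤ m * (v ⬝ᵥ A *ᵥ v) * t) :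
    0 ≤ reducedLoss A v m γ t := by
  have h := (isShiftedSolution_inv_mulVec hA (mul_nonneg ht hm) hγ v).mul_sq_le_mul_dotProduct_sub
    hA (mul_nonneg ht hm) hγ.le
  unfold reducedLoss
  set R := v ⬝ᵥ ((t * m) • A + γ • (1 : Matrix ι ι ℝ))⁻¹ *ᵥ v
  refine mul_nonneg ht (sub_nonneg.mpr (not_lt.mp fun hR => ?_))
  have hS2 : 0 ≤ A *ᵥ v ⬝ᵥ A *ᵥ v := by simpa using dotProduct_self_star_nonneg (A *ᵥ v)
  have hgap : v ⬝ᵥ v - γ * R < v ⬝ᵥ v - γ ^ 2 := by nlinarith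
  have hcoef : 0 < t * m * (A *ᵥ v ⬝ᵥ A *ᵥ v) + γ * (v ⬝ᵥ A *ᵥ v) := by
    have := mul_nonneg (mul_nonneg ht hm) hS2
    positivity
  have h' := h.trans_lt (mul_lt_mul_of_pos_left hgap hcoef)
  nlinarith [mul_le_mul_of_nonneg_left hsmall (mul_nonneg ht hm),
    mul_le_mul_of_nonneg_right hlarge hS1.le]

end Bounds

theorem sq_div_sub_le_of_isMinOn_reducedLoss {m γ r t₁ : ℝ} (hA : A.PosSemidef) (hm : 0 < m)
    (hS1 : 0 < v ⬝ᵥ A *ᵥ v) (hγ : 0 < γ) (hγr : γ < r) (hr : r ^ 2 = v ⬝ᵥ v)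
    (hsmall : 2 * (r ^ 2 - γ ^ 2) * (A *ᵥ v ⬝ᵥ A *ᵥ v) ≤ (v ⬝ᵥ A *ᵥ v) ^ 2) (ht₁ : 0 ≤ t₁)
    (hmin : IsMinOn (reducedLoss A v m γ) (Ici 0) t₁) :
    (t₁ / (r - γ) - (r + γ) * γ / (2 * m * (v ⬝ᵥ A *ᵥ v))) ^ 2 ≤
      8 * (A *ᵥ v ⬝ᵥ A *ᵥ v) * (r + γ) ^ 3 * γ ^ 2 * (r - γ) / (m ^ 2 * (v ⬝ᵥ A *ᵥ v) ^ 4) := by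
  have hup (t : ℝ) (ht : 0 ≤ t) := sq_mul_reducedLoss_le (v := v) hA hm.le hγ ht
  have hlow (t : ℝ) (ht : 0 ≤ t) := le_cube_mul_reducedLoss (v := v) hA hm.le hγ ht
  have hnonneg (t : ℝ) (ht : 0 ≤ t) := reducedLoss_nonneg (v := v) hA hm.le hγ ht hS1
  have hS2 : 0 ≤ A *ᵥ v ⬝ᵥ A *ᵥ v := by simpa using dotProduct_self_star_nonneg (A *ᵥ v)
  simp only [← hr] at hup hlow hnonneg
  set S1 := v ⬝ᵥ A *ᵥ v
  set S2 := A *ᵥ v ⬝ᵥ A *ᵥ v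
  have hrγ : 0 < r - γ := sub_pos.mpr hγr
  obtain ⟨t₀, ht₀⟩ : ∃ t₀, t₀ = (r - γ) * ((r + γ) * γ / (2 * m * S1)) := ⟨_, rfl⟩
  have ht₀pos : 0 < t₀ := ht₀ ▸ mul_pos hrγ (div_pos (mul_pos (by linarith) hγ) (by positivity))
  have ht₀' : 2 * m * S1 * t₀ = (r ^ 2 - γ ^ 2) * γ := by rw [ht₀]; field_simp; ring
  have hkey := IsMinOn.sq_sub_le_of_cubic_bounds (a := m * S1 / γ ^ 2) (t₀ := t₀)
    (κ := m ^ 2 * S2 / γ ^ 3) (by positivity) ht₀pos (by positivity) ht₁ hmin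
    (fun t ht => by
      rw [← mul_le_mul_iff_right₀ (pow_pos hγ 2)]
      refine (hup t ht).trans_eq ?_
      field_simp
      linear_combination t * ht₀')
    (fun t ht => by
      rw [← mul_le_mul_iff_right₀ (pow_pos hγ 3)]
      refine le_of_eq_of_le ?_ (hlow t ht)
      field_simp
      linear_combination (-t * γ) * ht₀')
    (fun t ht => by
      refine hnonneg t (by linarith) hsmall ?_
      nlinarith [mul_le_mul_of_nonneg_right ht (by positivity : (0:ℝ) ≤ m * S1)])
  have hsplit : t₁ / (r - γ) - (r + γ) * γ / (2 * m * S1) = (t₁ - t₀) / (r - γ) := by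
    rw [ht₀]
    field_simp
  have hrhs : 8 * S2 * (r + γ) ^ 3 * γ ^ 2 * (r - γ) / (m ^ 2 * S1 ^ 4) * (r - γ) ^ 2 =
      64 * (m ^ 2 * S2 / γ ^ 3) * t₀ ^ 3 / (m * S1 / γ ^ 2) := by
    rw [ht₀]
    field_simp
    ring
  rw [hsplit, div_pow, div_le_iff₀ (by positivity), hrhs, le_div_iff₀ (by positivity)]
  linarith

end ReducedLoss

section DepthOne

variable {n : ℕ} {A₀ : Matrix (Fin n) (Fin n) ℝ} {v : Fin n → ℝ} {c : ℝ} {d₁ : ℕ} {σ : ℝ}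

theorem effLoss1_eq_reducedLoss (b γ : ℝ) :
    effLoss1 A₀ v c d₁ σ b γ = c + d₁ * reducedLoss A₀ v (σ ^ 2 + d₁) γ (b ^ 2) := by
  unfold effLoss1 reducedLoss
  ring

theorem isMinOn_reducedLoss_sq {γ b₀ : ℝ} (hd₁ : 0 < d₁)
    (hmin : ∀ b, effLoss1 A₀ v c d₁ σ b₀ γ ≤ effLoss1 A₀ v c d₁ σ b γ) :
    IsMinOn (reducedLoss A₀ v (σ ^ 2 + d₁) γ) (Ici 0) (b₀ ^ 2) := by
  intro t ht
  have h := hmin √t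
  rw [effLoss1_eq_reducedLoss, effLoss1_eq_reducedLoss, Real.sq_sqrt ht] at h
  exact le_of_mul_le_mul_left ((add_le_add_iff_left c).mp h) (Nat.cast_pos.mpr hd₁)

end DepthOne

theorem depth_one_critical_exponent_general {n : ℕ}
    (A₀ : Matrix (Fin n) (Fin n) ℝ) (hA : A₀.PosSemidef)
    (v : Fin n → ℝ) (hvA : 0 < v ⬝ᵥ A₀.mulVec v)
    (c : ℝ) (d₁ : ℕ) (hd₁ : 0 < d₁) (σ : ℝ)
    (bstar : ℝ → ℝ)
    (hbstar : ∀ γ ∈ Set.Ioo (0 : ℝ) (Real.sqrt (v ⬝ᵥ v)),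
      0 ≤ bstar γ ∧ ∀ b : ℝ, effLoss1 A₀ v c d₁ σ (bstar γ) γ ≤ effLoss1 A₀ v c d₁ σ b γ) :
    Filter.Tendsto (fun γ => (bstar γ) ^ 2 / (Real.sqrt (v ⬝ᵥ v) - γ))
      (nhdsWithin (Real.sqrt (v ⬝ᵥ v)) (Set.Iio (Real.sqrt (v ⬝ᵥ v))))
      (nhds ((v ⬝ᵥ v) / ((σ ^ 2 + (d₁ : ℝ)) * (v ⬝ᵥ A₀.mulVec v)))) := by
  set r := √(v ⬝ᵥ v)
  set m := σ ^ 2 + (d₁ : ℝ)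
  set S1 := v ⬝ᵥ A₀ *ᵥ v
  set S2 := A₀ *ᵥ v ⬝ᵥ A₀ *ᵥ v
  have hm : 0 < m := by positivity
  have hv : v ≠ 0 := by rintro rfl; simp [S1] at hvA
  have hr : r ^ 2 = v ⬝ᵥ v := Real.sq_sqrt (by simpa using dotProduct_self_star_nonneg v)
  have hr0 : 0 < r := Real.sqrt_pos.mpr (by simpa using dotProduct_self_star_pos_iff.mpr hv)
  have hsmall : ∀ᶠ γ in 𝓝[<] r, 2 * (r ^ 2 - γ ^ 2) * S2 ≤ S1 ^ 2 := by
    have h : Tendsto (fun γ => 2 * (r ^ 2 - γ ^ 2) * S2) (𝓝 r) (𝓝 0) :=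
      Continuous.tendsto' (by fun_prop) r 0 (by simp)
    exact (h.mono_left nhdsWithin_le_nhds).eventually (ge_mem_nhds (by positivity))
  refine Tendsto.of_sq_sub_le (h := fun γ => (r + γ) * γ / (2 * m * S1))
    (F := fun γ => 8 * S2 * (r + γ) ^ 3 * γ ^ 2 * (r - γ) / (m ^ 2 * S1 ^ 4)) ?_ ?_ ?_
  · refine (Continuous.tendsto' (by fun_prop) r _ ?_).mono_left nhdsWithin_le_nhds
    rw [← hr]
    field_simp
    ring
  · exact (Continuous.tendsto' (by fun_prop) r 0 (by simp)).mono_left nhdsWithin_le_nhds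
  · filter_upwards [Ioo_mem_nhdsLT hr0, hsmall] with γ hγ hγsmall
    exact sq_div_sub_le_of_isMinOn_reducedLoss hA hm hvA hγ.1 hγ.2 hr hγsmall (sq_nonneg _)
      (isMinOn_reducedLoss_sq hd₁ (hbstar γ hγ).2)

/-- as γ → ‖v‖⁻, any nonnegative global minimizer b_*(γ) of the depth-1
effective loss satisfies b_*(γ)²/(‖v‖ − γ) → ‖v‖²/((σ²+d₁) vᵀA₀v): the order parameter
vanishes with the Landau critical exponent 1/2. -/
theorem depth_one_critical_exponent {n : ℕ} (hn : 1 ≤ n)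
    (A₀ : Matrix (Fin n) (Fin n) ℝ) (hA : A₀.PosSemidef)
    (v : Fin n → ℝ) (hv : v ≠ 0) (hvA : 0 < v ⬝ᵥ A₀.mulVec v)
    (c : ℝ) (d₁ : ℕ) (hd₁ : 0 < d₁) (σ : ℝ) (hσ : 0 ≤ σ)
    (bstar : ℝ → ℝ)
    (hbstar : ∀ γ ∈ Set.Ioo (0 : ℝ) (Real.sqrt (v ⬝ᵥ v)),
      0 ≤ bstar γ ∧ ∀ b : ℝ, effLoss1 A₀ v c d₁ σ (bstar γ) γ ≤ effLoss1 A₀ v c d₁ σ b γ) :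
    Filter.Tendsto (fun γ => (bstar γ) ^ 2 / (Real.sqrt (v ⬝ᵥ v) - γ))
      (nhdsWithin (Real.sqrt (v ⬝ᵥ v)) (Set.Iio (Real.sqrt (v ⬝ᵥ v))))
      (nhds ((v ⬝ᵥ v) / ((σ ^ 2 + (d₁ : ℝ)) * (v ⬝ᵥ A₀.mulVec v)))) :=
  depth_one_critical_exponent_general A₀ hA v hvA c d₁ hd₁ σ bstar hbstar
end

section
/- Suppose v ≠ 0 and vᵀA₀v > 0. Then L is differentiable at the critical point γ = ‖v‖ with L′(‖v‖) = 0; in particular, the first derivative of the optimal depth-1 loss is continuous at the transition, so the transition is not first order. -/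
/-!
With `k = b²(σ² + d₁)` and `u = (k A₀ + γ I)⁻¹ v` one has `ℓ̄(b, γ) - c = d₁ b² (γ - v ⬝ u)`.
Expanding `v = (k A₀ + γ I) u` and using `A₀ ≤ tr A₀ • I` and `A₀² ≤ tr A₀ • A₀`, a scalar
estimate gives `ℓ̄(b, γ) ≥ c - (‖v‖² - γ²)² / (2 vᵀA₀v)` for every `b`, as soon as `γ` is close
to `‖v‖`. Since `ℓ̄(0, γ) = c`, the loss `L` is squeezed between `c - O((γ - ‖v‖)²)` and `c`, so
it is differentiable at `‖v‖` with derivative `0`.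
-/

open Matrix

lemma neg_sq_le_of_mul_eq_sub {γ k a q P e x : ℝ} (hγ : 0 < γ) (hk : 0 ≤ k) (ha : 0 ≤ a)
    (hP : 0 < P) (hPq : P ≤ q * (γ + k * a)) (he : 2 * a * e ≤ P) (hx : γ * x = k * q - e) :
    -e ^ 2 ≤ 2 * P * k * x := by
  have hq : 0 < q := pos_of_mul_pos_left (hP.trans_le hPq) (by positivity)
  -- For `k a ≤ γ` this is AM-GM in `k`; otherwise `x ≥ 0`.
  rcases le_or_gt (k * a) γ with hka | hka
  · have hPγ : P * (P * k ^ 2) ≤ 2 * γ * q * (P * k ^ 2) := by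
      gcongr
      nlinarith
    have hγγ : γ * (γ * (2 * P * k * x + e ^ 2)) =
        γ * (2 * P * k * (k * q - e)) + γ ^ 2 * e ^ 2 := by
      rw [← hx]; ring
    have h : 0 ≤ γ * (γ * (2 * P * k * x + e ^ 2)) := by
      nlinarith [sq_nonneg (P * k - γ * e)]
    have := (mul_nonneg_iff_of_pos_left hγ).mp ((mul_nonneg_iff_of_pos_left hγ).mp h)
    linarith
  · have ha : 0 < a := pos_of_mul_pos_right (hγ.trans hka) hk
    have hekq : e < k * q := by
      have : a * e < a * (k * q) := by nlinarith [mul_lt_mul_of_pos_left hka hq]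
      exact lt_of_mul_lt_mul_left this ha.le
    have hx : 0 ≤ x := by nlinarith
    nlinarith [sq_nonneg e, mul_nonneg (mul_nonneg hP.le hk) hx]

namespace Matrix
variable {m ι : Type*} [Fintype m] [Fintype ι]

lemma mulVec_dotProduct_mulVec_le_trace_transpose_mul_self (B : Matrix m ι ℝ) (x : ι → ℝ) :
    (B *ᵥ x) ⬝ᵥ (B *ᵥ x) ≤ (Bᵀ * B).trace * (x ⬝ᵥ x) := by
  have htr : (Bᵀ * B).trace = ∑ i, ∑ j, B i j ^ 2 := by
    simp only [trace, diag, mul_apply, transpose_apply, ← sq]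
    exact Finset.sum_comm
  rw [htr, Finset.sum_mul]
  refine Finset.sum_le_sum fun i _ => ?_
  simpa only [mulVec, dotProduct, ← sq] using Finset.sum_mul_sq_le_sq_mul_sq Finset.univ (B i) x

lemma IsSymm.dotProduct_mulVec_comm {A : Matrix ι ι ℝ} (hA : A.IsSymm) (x y : ι → ℝ) :
    x ⬝ᵥ A *ᵥ y = (A *ᵥ x) ⬝ᵥ y := by
  rw [dotProduct_mulVec, ← mulVec_transpose, hA.eq]

lemma dotProduct_transpose_mul_self_mulVec (B : Matrix m ι ℝ) (x : ι → ℝ) :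
    x ⬝ᵥ (Bᵀ * B) *ᵥ x = (B *ᵥ x) ⬝ᵥ (B *ᵥ x) := by
  rw [← mulVec_mulVec, dotProduct_mulVec, ← mulVec_transpose, transpose_transpose]

namespace PosSemidef
variable {A : Matrix ι ι ℝ}

open scoped MatrixOrder in
lemma exists_transpose_mul_self_eq [DecidableEq ι] (hA : A.PosSemidef) :
    ∃ B : Matrix ι ι ℝ, Bᵀ * B = A := by
  refine ⟨CFC.sqrt A, ?_⟩
  rw [← conjTranspose_eq_transpose_of_trivial, (CFC.sqrt_nonneg A).posSemidef.isHermitian.eq]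
  exact CFC.sqrt_mul_sqrt_self A hA.nonneg

lemma dotProduct_mulVec_le_trace_mul (hA : A.PosSemidef) (x : ι → ℝ) :
    x ⬝ᵥ A *ᵥ x ≤ A.trace * (x ⬝ᵥ x) := by
  classical
  obtain ⟨B, rfl⟩ := hA.exists_transpose_mul_self_eq
  rw [dotProduct_transpose_mul_self_mulVec]
  exact mulVec_dotProduct_mulVec_le_trace_transpose_mul_self B x

lemma mulVec_dotProduct_mulVec_le_trace_mul (hA : A.PosSemidef) (x : ι → ℝ) :
    (A *ᵥ x) ⬝ᵥ (A *ᵥ x) ≤ A.trace * (x ⬝ᵥ A *ᵥ x) := by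
  classical
  obtain ⟨B, rfl⟩ := hA.exists_transpose_mul_self_eq
  have h := mulVec_dotProduct_mulVec_le_trace_transpose_mul_self Bᵀ (B *ᵥ x)
  rw [dotProduct_transpose_mul_self_mulVec, ← mulVec_mulVec]
  rwa [transpose_transpose, trace_mul_comm] at h

-- In an eigenbasis of `A` this reads `λ (kλ + γ)² ≤ λ (kλ + γ) (γ + k tr A)`.
lemma dotProduct_mulVec_le_of_eq_smul_mulVec_add_smul (hA : A.PosSemidef) {k γ : ℝ}
    (hk : 0 ≤ k) (hγ : 0 ≤ γ) {u v : ι → ℝ} (hv : v = k • A *ᵥ u + γ • u) :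
    v ⬝ᵥ A *ᵥ v ≤ (v ⬝ᵥ A *ᵥ u) * (γ + k * A.trace) := by
  have hsymm := (isHermitian_iff_isSymm.mp hA.isHermitian).dotProduct_mulVec_comm
  have h₁ := hA.mulVec_dotProduct_mulVec_le_trace_mul u
  have h₂ := hA.dotProduct_mulVec_le_trace_mul (A *ᵥ u)
  subst hv
  simp only [mulVec_add, mulVec_smul, add_dotProduct, dotProduct_add, smul_dotProduct,
    dotProduct_smul, smul_eq_mul, hsymm u (A *ᵥ u)]
  nlinarith [mul_nonneg hk hγ, mul_le_mul_of_nonneg_left h₁ (mul_nonneg hk hγ),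
    mul_le_mul_of_nonneg_left h₂ (mul_nonneg hk hk)]

lemma neg_sq_le_dotProduct_resolvent [DecidableEq ι] (hA : A.PosSemidef) {k γ : ℝ}
    (hk : 0 ≤ k) (hγ : 0 < γ) {v : ι → ℝ} (hP : 0 < v ⬝ᵥ A *ᵥ v)
    (he : 2 * A.trace * (v ⬝ᵥ v - γ ^ 2) ≤ v ⬝ᵥ A *ᵥ v) :
    -(v ⬝ᵥ v - γ ^ 2) ^ 2 ≤ 2 * (v ⬝ᵥ A *ᵥ v) * k * (γ - v ⬝ᵥ (k • A + γ • 1)⁻¹ *ᵥ v) := by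
  set M := k • A + γ • (1 : Matrix ι ι ℝ)
  have hM : M.PosDef := PosDef.posSemidef_add (hA.smul hk) (PosDef.one.smul hγ)
  set u := M⁻¹ *ᵥ v
  have hv : v = k • A *ᵥ u + γ • u := by
    have hMu : M *ᵥ u = v := by
      rw [mulVec_mulVec, mul_nonsing_inv M hM.det_pos.ne'.isUnit, one_mulVec]
    rw [← hMu, add_mulVec, smul_mulVec, smul_mulVec, one_mulVec]
  have hvv : v ⬝ᵥ v = k * (v ⬝ᵥ A *ᵥ u) + γ * (v ⬝ᵥ u) := by
    nth_rewrite 2 [hv]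
    simp only [dotProduct_add, dotProduct_smul, smul_eq_mul]
  exact neg_sq_le_of_mul_eq_sub hγ hk hA.trace_nonneg hP
    (hA.dotProduct_mulVec_le_of_eq_smul_mulVec_add_smul hk hγ.le hv) he
    (by linear_combination hvv)

end PosSemidef
end Matrix

open Filter Topology

lemma hasDerivAt_of_eventually_le_of_le {f g h : ℝ → ℝ} {x₀ f' : ℝ}
    (hg : HasDerivAt g f' x₀) (hh : HasDerivAt h f' x₀) (hgf : ∀ᶠ x in 𝓝 x₀, g x ≤ f x)
    (hfh : ∀ᶠ x in 𝓝 x₀, f x ≤ h x) (hgh : g x₀ = h x₀) : HasDerivAt f f' x₀ := by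
  have hfg : f x₀ = g x₀ := le_antisymm (hgh ▸ hfh.self_of_nhds) hgf.self_of_nhds
  rw [hasDerivAt_iff_isLittleO, Asymptotics.isLittleO_iff] at hg hh ⊢
  intro ε hε
  filter_upwards [hg hε, hh hε, hgf, hfh] with x hgx hhx hgfx hfhx
  rw [Real.norm_eq_abs, abs_le] at hgx hhx ⊢
  constructor <;> linarith [hgx.1, hhx.2]

lemma sub_sq_div_le_effLoss1 {n : ℕ} {A₀ : Matrix (Fin n) (Fin n) ℝ} (hA : A₀.PosSemidef)
    {v : Fin n → ℝ} (hP : 0 < v ⬝ᵥ A₀ *ᵥ v) (c : ℝ) {d₁ : ℕ} (hd₁ : 0 < d₁) (σ : ℝ) {γ : ℝ}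
    (hγ : 0 < γ) (he : 2 * A₀.trace * (v ⬝ᵥ v - γ ^ 2) ≤ v ⬝ᵥ A₀ *ᵥ v) (b : ℝ) :
    c - (v ⬝ᵥ v - γ ^ 2) ^ 2 / (2 * (v ⬝ᵥ A₀ *ᵥ v)) ≤ effLoss1 A₀ v c d₁ σ b γ := by
  set s : ℝ := σ ^ 2 + d₁
  have hd : (0 : ℝ) < d₁ := Nat.cast_pos.mpr hd₁
  have hs : (d₁ : ℝ) ≤ s := le_add_of_nonneg_left (sq_nonneg σ)
  have key := hA.neg_sq_le_dotProduct_resolvent (k := b ^ 2 * s) (by positivity) hγ hP he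
  set x := γ - v ⬝ᵥ (((b ^ 2 * s) • A₀ + γ • 1)⁻¹ *ᵥ v)
  have hloss : effLoss1 A₀ v c d₁ σ b γ = c + d₁ * (b ^ 2 * x) := by
    unfold effLoss1; ring
  have hy : -(v ⬝ᵥ v - γ ^ 2) ^ 2 / (2 * (v ⬝ᵥ A₀ *ᵥ v)) ≤ d₁ * (b ^ 2 * x) := by
    rw [div_le_iff₀ (by positivity)]
    rcases le_total 0 (b ^ 2 * x) with hy | hy
    · nlinarith [sq_nonneg (v ⬝ᵥ v - γ ^ 2)]
    · nlinarith [mul_le_mul_of_nonpos_right hs hy]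
  rw [neg_div] at hy
  rw [hloss]
  linarith

theorem depth_one_first_derivative_continuous_general {n : ℕ}
    (A₀ : Matrix (Fin n) (Fin n) ℝ) (hA : A₀.PosSemidef)
    (v : Fin n → ℝ) (hv : v ≠ 0) (hvA : 0 < v ⬝ᵥ A₀.mulVec v)
    (c : ℝ) (d₁ : ℕ) (hd₁ : 0 < d₁) (σ : ℝ) :
    HasDerivAt (fun γ : ℝ => ⨅ b : ℝ, effLoss1 A₀ v c d₁ σ b γ) 0
      (Real.sqrt (v ⬝ᵥ v)) := by
  have hN : 0 < v ⬝ᵥ v := by simpa using dotProduct_star_self_pos_iff.mpr hv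
  set γ₀ := √(v ⬝ᵥ v)
  have hγ₀ : γ₀ ^ 2 = v ⬝ᵥ v := Real.sq_sqrt hN.le
  set g : ℝ → ℝ := fun γ => c - (v ⬝ᵥ v - γ ^ 2) ^ 2 / (2 * (v ⬝ᵥ A₀ *ᵥ v))
  have hg : HasDerivAt g 0 γ₀ := by
    have h := ((((hasDerivAt_pow 2 γ₀).const_sub (v ⬝ᵥ v)).pow 2).div_const
      (2 * (v ⬝ᵥ A₀ *ᵥ v))).const_sub c
    rw [hγ₀, sub_self] at h
    simpa using h
  have hbound : ∀ᶠ γ in 𝓝 γ₀, ∀ b, g γ ≤ effLoss1 A₀ v c d₁ σ b γ := by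
    have hpos : ∀ᶠ γ in 𝓝 γ₀, 0 < γ := lt_mem_nhds (Real.sqrt_pos.mpr hN)
    have hnear : ∀ᶠ γ in 𝓝 γ₀, 2 * A₀.trace * (v ⬝ᵥ v - γ ^ 2) < v ⬝ᵥ A₀ *ᵥ v :=
      ContinuousAt.eventually_lt (by fun_prop) continuousAt_const (by simpa [hγ₀] using hvA)
    filter_upwards [hpos, hnear] with γ hγ he
    exact sub_sq_div_le_effLoss1 hA hvA c hd₁ σ hγ he.le
  refine hasDerivAt_of_eventually_le_of_le hg (hasDerivAt_const γ₀ c)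
    (hbound.mono fun γ h => le_ciInf h) (hbound.mono fun γ h => ?_) (by simp [g, hγ₀])
  exact (ciInf_le ⟨g γ, Set.forall_mem_range.2 h⟩ 0).trans_eq (by simp [effLoss1])

/-- the optimal depth-1 loss L(γ) = inf_b ℓ̄(b, γ) is differentiable at the
critical point γ = ‖v‖ with L′(‖v‖) = 0: the transition is not first order. -/
theorem depth_one_first_derivative_continuous {n : ℕ} (hn : 1 ≤ n)
    (A₀ : Matrix (Fin n) (Fin n) ℝ) (hA : A₀.PosSemidef)
    (v : Fin n → ℝ) (hv : v ≠ 0) (hvA : 0 < v ⬝ᵥ A₀.mulVec v)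
    (c : ℝ) (d₁ : ℕ) (hd₁ : 0 < d₁) (σ : ℝ) (hσ : 0 ≤ σ) :
    HasDerivAt (fun γ : ℝ => ⨅ b : ℝ, effLoss1 A₀ v c d₁ σ b γ) 0
      (Real.sqrt (v ⬝ᵥ v)) :=
  depth_one_first_derivative_continuous_general A₀ hA v hv hvA c d₁ hd₁ σ
end

section
/- Let D ≥ 2 and γ > 0. Then b = 0 is a strict local minimum of ℓ̄_D(·, γ): there exists δ > 0 such that ℓ̄_D(b, γ) > c for all b with 0 < |b| < δ. In particular, for networks with more than one hidden layer the trivial solution is always a local minimum of the effective landscape. -/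
/-!
Each data term of the loss is at most its value with the `aᵢ`-term of the denominator dropped,
so the loss exceeds `c` by at least `M b² − K b^{2D}` with `M = γ D d₀² > 0`.
For `D ≥ 2` the exponent `2D` exceeds `2`, so the quadratic regulariser wins near `b = 0`.
-/

open Filter Topology

lemma eventually_mul_pow_lt_mul_sq {K M : ℝ} (hM : 0 < M) {m : ℕ} (hm : 2 < m) :
    ∀ᶠ x in 𝓝[≠] (0 : ℝ), K * x ^ m < M * x ^ 2 := by
  have hsmall : ∀ᶠ x in 𝓝 (0 : ℝ), K * x ^ (m - 2) < M := by
    have hlim : Tendsto (fun x : ℝ => K * x ^ (m - 2)) (𝓝 0) (𝓝 0) := by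
      simpa [zero_pow (by omega : m - 2 ≠ 0)] using
        ((continuous_pow (m - 2)).const_mul K).tendsto (0 : ℝ)
    exact hlim.eventually (gt_mem_nhds hM)
  filter_upwards [nhdsWithin_le_nhds hsmall, self_mem_nhdsWithin] with x hx hx0
  calc K * x ^ m = K * x ^ (m - 2) * x ^ 2 := by
        rw [mul_assoc, ← pow_add, Nat.sub_add_cancel hm.le]
    _ < M * x ^ 2 := mul_lt_mul_of_pos_right hx (sq_pos_of_ne_zero hx0)

lemma effLoss_ge {n : ℕ} (d₀ : ℕ) (σ : ℝ) (v a : Fin n → ℝ) (ha : ∀ i, 0 ≤ a i) (c : ℝ)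
    (D : ℕ) (b : ℝ) {γ : ℝ} (hγ : 0 < γ) :
    c + γ * D * d₀ ^ 2 * b ^ 2 - (∑ i, (d₀ : ℝ) ^ (2 * D) * v i ^ 2 / γ) * b ^ (2 * D) ≤
      effLoss d₀ σ v a c D b γ := by
  have hsum : ∑ i, (d₀ : ℝ) ^ (2 * D) * b ^ (2 * D) * v i ^ 2 /
      ((d₀ : ℝ) ^ D * (σ ^ 2 + d₀) ^ D * a i * b ^ (2 * D) + γ) ≤
        (∑ i, (d₀ : ℝ) ^ (2 * D) * v i ^ 2 / γ) * b ^ (2 * D) := by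
    rw [Finset.sum_mul]
    refine Finset.sum_le_sum fun i _ => ?_
    have hb : 0 ≤ b ^ (2 * D) := by rw [pow_mul]; positivity
    have hden : γ ≤ (d₀ : ℝ) ^ D * (σ ^ 2 + d₀) ^ D * a i * b ^ (2 * D) + γ := by
      have := ha i
      simp only [le_add_iff_nonneg_left]
      positivity
    calc _ ≤ (d₀ : ℝ) ^ (2 * D) * b ^ (2 * D) * v i ^ 2 / γ :=
          div_le_div_of_nonneg_left (by positivity) hγ hden
      _ = _ := by ring
  unfold effLoss
  linarith

theorem deep_trivial_is_local_min_general {n : ℕ} (d₀ : ℕ) (hd₀ : 0 < d₀) (σ : ℝ)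
    (v a : Fin n → ℝ) (ha : ∀ i, 0 ≤ a i) (c : ℝ)
    (D : ℕ) (hD : 2 ≤ D) (γ : ℝ) (hγ : 0 < γ) :
    ∃ δ > 0, ∀ b : ℝ, 0 < |b| → |b| < δ → c < effLoss d₀ σ v a c D b γ := by
  have hM : 0 < γ * D * d₀ ^ 2 := by
    have hD₀ : (0 : ℝ) < D := by exact_mod_cast (by omega : 0 < D)
    have hd₀' : (0 : ℝ) < d₀ := by exact_mod_cast hd₀
    positivity
  obtain ⟨δ, hδ, hnear⟩ := Metric.eventually_nhds_iff.1 <| eventually_nhdsWithin_iff.1 <|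
    eventually_mul_pow_lt_mul_sq (K := ∑ i, (d₀ : ℝ) ^ (2 * D) * v i ^ 2 / γ) hM
      (by omega : 2 < 2 * D)
  refine ⟨δ, hδ, fun b hb hbδ => ?_⟩
  have hreg := hnear (by rwa [Real.dist_0_eq_abs]) (abs_pos.1 hb)
  linarith [effLoss_ge d₀ σ v a ha c D b hγ]

/-- for D ≥ 2 and γ > 0, b = 0 is a strict local minimum of the depth-D
effective loss: the trivial solution is always a local minimum for nets with more than
one hidden layer. -/
theorem deep_trivial_is_local_min {n : ℕ} (d₀ : ℕ) (hd₀ : 0 < d₀) (σ : ℝ) (hσ : 0 ≤ σ)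
    (v a : Fin n → ℝ) (ha : ∀ i, 0 ≤ a i) (c : ℝ)
    (D : ℕ) (hD : 2 ≤ D) (γ : ℝ) (hγ : 0 < γ) :
    ∃ δ > 0, ∀ b : ℝ, 0 < |b| → |b| < δ → c < effLoss d₀ σ v a c D b γ :=
  deep_trivial_is_local_min_general d₀ hd₀ σ v a ha c D hD γ hγ
end

section
/- Let D ≥ 2, v ≠ 0, and γ > 0. If b > 0 satisfies ℓ̄_D(b, γ) ≤ c = ℓ̄_D(0, γ), then b ≥ (1/d₀) (γ/‖v‖)^{1/(D−1)}. In particular, every nonzero global minimizer of ℓ̄_D(·, γ) is bounded away from 0 by (1/d₀)(γ/‖v‖)^{1/(D−1)}. -/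
theorem Finset.sum_div_add_le_sum_div {ι : Type*} (s : Finset ι) {w x : ι → ℝ} {γ : ℝ}
    (hγ : 0 < γ) (hw : ∀ i ∈ s, 0 ≤ w i) (hx : ∀ i ∈ s, 0 ≤ x i) :
    ∑ i ∈ s, w i / (x i + γ) ≤ (∑ i ∈ s, w i) / γ := by
  rw [Finset.sum_div]
  gcongr with i hi
  · exact hw i hi
  · linarith [hx i hi]

theorem sq_mul_sq_le_of_effLoss_le {n : ℕ} (d₀ : ℕ) (σ : ℝ) (v a : Fin n → ℝ)
    (ha : ∀ i, 0 ≤ a i) (c : ℝ) (D : ℕ) {γ : ℝ} (hγ : 0 < γ) (b : ℝ)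
    (hle : effLoss d₀ σ v a c D b γ ≤ c) :
    γ ^ 2 * D * ((d₀ : ℝ) * b) ^ 2 ≤ ((d₀ : ℝ) * b) ^ (2 * D) * ∑ i, v i ^ 2 := by
  have hpenalty : γ * D * (d₀ : ℝ) ^ 2 * b ^ 2 ≤
      ∑ i, (d₀ : ℝ) ^ (2 * D) * b ^ (2 * D) * v i ^ 2 /
        ((d₀ : ℝ) ^ D * (σ ^ 2 + (d₀ : ℝ)) ^ D * a i * b ^ (2 * D) + γ) := by
    unfold effLoss at hle
    linarith
  have hdata := Finset.sum_div_add_le_sum_div Finset.univ hγ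
    (w := fun i ↦ (d₀ : ℝ) ^ (2 * D) * b ^ (2 * D) * v i ^ 2)
    (x := fun i ↦ (d₀ : ℝ) ^ D * (σ ^ 2 + (d₀ : ℝ)) ^ D * a i * b ^ (2 * D))
    (fun i _ ↦ by rw [pow_mul, pow_mul]; positivity)
    (fun i _ ↦ by have := ha i; rw [pow_mul]; positivity)
  rw [← Finset.mul_sum] at hdata
  have := (le_div_iff₀ hγ).mp (hpenalty.trans hdata)
  rw [mul_pow, mul_pow]
  linarith

theorem le_pow_mul_sqrt_of_sq_mul_sq_le {γ k x T : ℝ} {m : ℕ} (hγ : 0 ≤ γ) (hk : 1 ≤ k)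
    (hx : 0 < x) (hT : 0 ≤ T) (h : γ ^ 2 * k * x ^ 2 ≤ x ^ (2 * (m + 1)) * T) :
    γ ≤ x ^ m * √T := by
  have hsq : γ ^ 2 ≤ (x ^ m * √T) ^ 2 := by
    have hx2 : 0 < x ^ 2 := by positivity
    rw [← mul_le_mul_iff_left₀ hx2]
    calc γ ^ 2 * x ^ 2 ≤ γ ^ 2 * k * x ^ 2 := 
        mul_le_mul_of_nonneg_right (le_mul_of_one_le_right (sq_nonneg γ) hk) (sq_nonneg x)
      _ ≤ x ^ (2 * (m + 1)) * T := h
      _ = (x ^ m * √T) ^ 2 * x ^ 2 := by rw [mul_pow, Real.sq_sqrt hT]; ring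
  exact (pow_le_pow_iff_left₀ hγ (by positivity) two_ne_zero).mp hsq

theorem Real.rpow_inv_natCast_le_of_le_pow {y x : ℝ} {m : ℕ} (hy : 0 ≤ y) (hx : 0 ≤ x)
    (hm : m ≠ 0) (h : y ≤ x ^ m) : y ^ (m⁻¹ : ℝ) ≤ x := by
  calc y ^ (m⁻¹ : ℝ) ≤ (x ^ m) ^ (m⁻¹ : ℝ) := Real.rpow_le_rpow hy h (by positivity)
    _ = x := Real.pow_rpow_inv_natCast hx hm

theorem deep_minimizer_lower_bound_general {n : ℕ} (d₀ : ℕ) (hd₀ : 0 < d₀) (σ : ℝ)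
    (v a : Fin n → ℝ) (ha : ∀ i, 0 ≤ a i) (c : ℝ)
    (D : ℕ) (hD : 2 ≤ D) (γ : ℝ) (hγ : 0 < γ)
    (b : ℝ) (hb : 0 < b) (hle : effLoss d₀ σ v a c D b γ ≤ c) :
    (1 / (d₀ : ℝ)) * (γ / Real.sqrt (∑ i, (v i) ^ 2)) ^ ((1 : ℝ) / ((D : ℝ) - 1)) ≤ b := by
  obtain ⟨m, rfl⟩ : ∃ m, D = m + 1 := ⟨D - 1, by omega⟩
  have hm : m ≠ 0 := by omega
  have hx : 0 < (d₀ : ℝ) * b := by positivity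
  have hexp : (1 : ℝ) / (((m + 1 : ℕ) : ℝ) - 1) = (m⁻¹ : ℝ) := by push_cast; ring
  have hγ_le : γ ≤ ((d₀ : ℝ) * b) ^ m * √(∑ i, v i ^ 2) :=
    le_pow_mul_sqrt_of_sq_mul_sq_le hγ.le (by simp) hx (by positivity)
      (sq_mul_sq_le_of_effLoss_le d₀ σ v a ha c (m + 1) hγ b hle)
  have hroot : (γ / √(∑ i, v i ^ 2)) ^ (m⁻¹ : ℝ) ≤ (d₀ : ℝ) * b :=
    Real.rpow_inv_natCast_le_of_le_pow (by positivity) hx.le hm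
      (div_le_of_le_mul₀ (by positivity) (by positivity) hγ_le)
  rw [hexp, one_div_mul_eq_div]
  exact div_le_of_le_mul₀ (by positivity) hb.le (by linarith)

/-- for D ≥ 2, v ≠ 0 and γ > 0, any b > 0 with ℓ̄_D(b, γ) ≤ c satisfies
b ≥ (1/d₀)(γ/‖v‖)^{1/(D−1)}: nonzero global minimizers are bounded away from zero. -/
theorem deep_minimizer_lower_bound {n : ℕ} (d₀ : ℕ) (hd₀ : 0 < d₀) (σ : ℝ) (hσ : 0 ≤ σ)
    (v a : Fin n → ℝ) (hv : v ≠ 0) (ha : ∀ i, 0 ≤ a i) (c : ℝ)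
    (D : ℕ) (hD : 2 ≤ D) (γ : ℝ) (hγ : 0 < γ)
    (b : ℝ) (hb : 0 < b) (hle : effLoss d₀ σ v a c D b γ ≤ c) :
    (1 / (d₀ : ℝ)) * (γ / Real.sqrt (∑ i, (v i) ^ 2)) ^ ((1 : ℝ) / ((D : ℝ) - 1)) ≤ b :=
  deep_minimizer_lower_bound_general d₀ hd₀ σ v a ha c D hD γ hγ b hb hle
end

section
/- Let D ≥ 1, γ > 0, and suppose a_min := min_i a_i > 0. If b > 0 is a critical point of ℓ̄_D(·, γ) (i.e., ∂ℓ̄_D/∂b (b, γ) = 0), then b ≤ (‖v‖ / (d₀ (σ²+d₀)^D a_min))^{1/(D+1)}. In particular, every nonzero global minimizer of ℓ̄_D(·, γ) obeys this upper bound, uniformly in γ. -/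
open Finset Real

def modeCoeff (d₀ : ℕ) (σ : ℝ) (D : ℕ) (x : ℝ) : ℝ :=
  (d₀ : ℝ) ^ D * (σ ^ 2 + d₀) ^ D * x

lemma modeCoeff_pos {d₀ : ℕ} (hd₀ : 0 < d₀) (σ : ℝ) (D : ℕ) {x : ℝ} (hx : 0 < x) :
    0 < modeCoeff d₀ σ D x := by
  unfold modeCoeff
  positivity

lemma modeCoeff_mono (d₀ : ℕ) (σ : ℝ) (D : ℕ) : Monotone (modeCoeff d₀ σ D) := fun _ _ h => by
  unfold modeCoeff
  gcongr

lemma hasDerivAt_pow_div_mul_pow_add {κ γ x : ℝ} (m : ℕ) (hx : κ * x ^ m + γ ≠ 0) :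
    HasDerivAt (fun y => y ^ m / (κ * y ^ m + γ))
      (γ * (m * x ^ (m - 1)) / (κ * x ^ m + γ) ^ 2) x :=
  ((hasDerivAt_pow m x).div (((hasDerivAt_pow m x).const_mul κ).add_const γ) hx).congr_deriv
    (by ring)

section effLoss

variable {n : ℕ} (d₀ : ℕ) (σ : ℝ) (v a : Fin n → ℝ) (c : ℝ)

lemma effLoss_eq (D : ℕ) (b γ : ℝ) :
    effLoss d₀ σ v a c D b γ =
      -∑ i, (d₀ : ℝ) ^ (2 * D) * v i ^ 2 *
          (b ^ (2 * D) / (modeCoeff d₀ σ D (a i) * b ^ (2 * D) + γ))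
        + c + γ * D * (d₀ : ℝ) ^ 2 * b ^ 2 := by
  simp only [effLoss, modeCoeff, mul_div_assoc']
  congr 3
  exact sum_congr rfl fun i _ => by ring

lemma hasDerivAt_effLoss (D : ℕ) {b γ : ℝ}
    (hden : ∀ i, modeCoeff d₀ σ D (a i) * b ^ (2 * D) + γ ≠ 0) :
    HasDerivAt (fun b' => effLoss d₀ σ v a c D b' γ)
      (-∑ i, (d₀ : ℝ) ^ (2 * D) * v i ^ 2 * (γ * (2 * D * b ^ (2 * D - 1)) /
          (modeCoeff d₀ σ D (a i) * b ^ (2 * D) + γ) ^ 2)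
        + 2 * γ * D * (d₀ : ℝ) ^ 2 * b) b := by
  simp only [effLoss_eq]
  refine (((HasDerivAt.fun_sum fun i _ => ?_).fun_neg.add_const c).fun_add
    ((hasDerivAt_pow 2 b).const_mul _)).congr_deriv (by ring)
  exact ((hasDerivAt_pow_div_mul_pow_add (2 * D) (hden i)).const_mul _).congr_deriv
    (by push_cast; ring)

lemma effLoss_critical_point_eq {D : ℕ} (hD : D ≠ 0) {b γ : ℝ} (hγ : 0 < γ)
    (hden : ∀ i, modeCoeff d₀ σ D (a i) * b ^ (2 * D) + γ ≠ 0)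
    (hcrit : HasDerivAt (fun b' => effLoss d₀ σ v a c D b' γ) 0 b) :
    ∑ i, (d₀ : ℝ) ^ (2 * D) * v i ^ 2 * b ^ (2 * D) /
        (modeCoeff d₀ σ D (a i) * b ^ (2 * D) + γ) ^ 2 = (d₀ : ℝ) ^ 2 * b ^ 2 := by
  have hderiv := (hasDerivAt_effLoss d₀ σ v a c D hden).unique hcrit
  have hpow : b ^ (2 * D - 1) * b = b ^ (2 * D) := pow_sub_one_mul (by omega) b
  have hfactor : (0 : ℝ) < 2 * γ * D := by positivity
  apply mul_left_cancel₀ hfactor.ne'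
  rw [mul_sum]
  calc ∑ i, 2 * γ * D * ((d₀ : ℝ) ^ (2 * D) * v i ^ 2 * b ^ (2 * D) /
          (modeCoeff d₀ σ D (a i) * b ^ (2 * D) + γ) ^ 2)
      = (∑ i, (d₀ : ℝ) ^ (2 * D) * v i ^ 2 * (γ * (2 * D * b ^ (2 * D - 1)) /
          (modeCoeff d₀ σ D (a i) * b ^ (2 * D) + γ) ^ 2)) * b := by
        rw [sum_mul]
        refine sum_congr rfl fun i _ => ?_
        rw [← hpow]
        ring
    _ = 2 * γ * D * ((d₀ : ℝ) ^ 2 * b ^ 2) := by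
        rw [neg_add_eq_zero.mp hderiv]
        ring

end effLoss

lemma sum_mul_div_sq_le {ι : Type*} (s : Finset ι) {w den : ι → ℝ} {k t : ℝ} (hk : 0 < k)
    (ht : 0 < t) (hw : ∀ i ∈ s, 0 ≤ w i) (hden : ∀ i ∈ s, k * t ≤ den i) :
    ∑ i ∈ s, w i * t / den i ^ 2 ≤ (∑ i ∈ s, w i) / (k ^ 2 * t) := by
  rw [sum_div]
  refine sum_le_sum fun i hi => ?_
  calc w i * t / den i ^ 2 ≤ w i * t / (k * t) ^ 2 := by
        gcongr
        · exact mul_nonneg (hw i hi) ht.le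
        · exact hden i hi
    _ = w i / (k ^ 2 * t) := by field_simp

lemma sq_mul_pow_le_of_effLoss_critical {n : ℕ} {d₀ : ℕ} (hd₀ : 0 < d₀) (σ : ℝ)
    (v a : Fin n → ℝ) (c : ℝ) {m : ℝ} (hm : 0 < m) (hma : ∀ i, m ≤ a i) {D : ℕ} (hD : D ≠ 0)
    {b γ : ℝ} (hb : 0 < b) (hγ : 0 < γ)
    (hcrit : HasDerivAt (fun b' => effLoss d₀ σ v a c D b' γ) 0 b) :
    ((d₀ : ℝ) * (σ ^ 2 + d₀) ^ D * m * b ^ (D + 1)) ^ 2 ≤ ∑ i, v i ^ 2 := by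
  have hd₀R : (0 : ℝ) < d₀ := by exact_mod_cast hd₀
  have hκmin := modeCoeff_pos hd₀ σ D hm
  have hκ i : modeCoeff d₀ σ D m * b ^ (2 * D) ≤ modeCoeff d₀ σ D (a i) * b ^ (2 * D) + γ :=
    le_add_of_le_of_nonneg
      (mul_le_mul_of_nonneg_right (modeCoeff_mono d₀ σ D (hma i)) (by positivity)) hγ.le
  have hden i : modeCoeff d₀ σ D (a i) * b ^ (2 * D) + γ ≠ 0 :=
    ((by positivity : 0 < modeCoeff d₀ σ D m * b ^ (2 * D)).trans_le (hκ i)).ne'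
  have hbound : (d₀ : ℝ) ^ 2 * b ^ 2 ≤
      (∑ i, (d₀ : ℝ) ^ (2 * D) * v i ^ 2) / (modeCoeff d₀ σ D m ^ 2 * b ^ (2 * D)) := by
    rw [← effLoss_critical_point_eq d₀ σ v a c hD hγ hden hcrit]
    exact sum_mul_div_sq_le _ hκmin (by positivity) (fun i _ => by positivity) fun i _ => hκ i
  rw [← mul_sum, le_div_iff₀ (by positivity)] at hbound
  refine le_of_mul_le_mul_left ?_ (by positivity : (0 : ℝ) < (d₀ : ℝ) ^ (2 * D))
  convert hbound using 1
  simp only [modeCoeff]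
  ring

lemma le_rpow_one_div_of_sq_mul_pow_le {K b S : ℝ} {m : ℕ} (hm : m ≠ 0) (hK : 0 < K)
    (hb : 0 ≤ b) (h : (K * b ^ m) ^ 2 ≤ S) : b ≤ (√S / K) ^ ((1 : ℝ) / m) := by
  rw [one_div, le_rpow_inv_iff_of_pos hb (by positivity) (by positivity), rpow_natCast,
    le_div_iff₀ hK, mul_comm]
  exact (le_sqrt (by positivity) ((sq_nonneg _).trans h)).mpr h

theorem deep_critical_point_upper_bound_general {n : ℕ} (hn : 0 < n)
    (d₀ : ℕ) (hd₀ : 0 < d₀) (σ : ℝ)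
    (v a : Fin n → ℝ) (ha : ∀ i, 0 < a i) (c : ℝ)
    (D : ℕ) (hD : 1 ≤ D) (γ : ℝ) (hγ : 0 < γ)
    (b : ℝ) (hb : 0 < b)
    (hcrit : HasDerivAt (fun b' => effLoss d₀ σ v a c D b' γ) 0 b) :
    b ≤ (Real.sqrt (∑ i, (v i) ^ 2) /
        ((d₀ : ℝ) * (σ ^ 2 + (d₀ : ℝ)) ^ D * ⨅ i, a i)) ^ ((1 : ℝ) / ((D : ℝ) + 1)) := by
  have : Nonempty (Fin n) := ⟨⟨0, hn⟩⟩
  obtain ⟨j, hj⟩ := exists_eq_ciInf_of_finite (f := a)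
  have hmin_pos : 0 < ⨅ i, a i := hj ▸ ha j
  have hmin_le i : ⨅ i, a i ≤ a i := ciInf_le (Set.finite_range a).bddBelow i
  have hsq := sq_mul_pow_le_of_effLoss_critical hd₀ σ v a c hmin_pos hmin_le
    (by omega) hb hγ hcrit
  have hd₀R : (0 : ℝ) < d₀ := by exact_mod_cast hd₀
  exact_mod_cast le_rpow_one_div_of_sq_mul_pow_le (m := D + 1) (by omega) (by positivity) hb.le
    hsq

/-- for D ≥ 1, γ > 0 and a_min = minᵢ aᵢ > 0, any positive critical point b
of ℓ̄_D(·, γ) satisfies b ≤ (‖v‖/(d₀ (σ²+d₀)^D a_min))^{1/(D+1)}, uniformly in γ. -/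
theorem deep_critical_point_upper_bound {n : ℕ} (hn : 0 < n)
    (d₀ : ℕ) (hd₀ : 0 < d₀) (σ : ℝ) (hσ : 0 ≤ σ)
    (v a : Fin n → ℝ) (ha : ∀ i, 0 < a i) (c : ℝ)
    (D : ℕ) (hD : 1 ≤ D) (γ : ℝ) (hγ : 0 < γ)
    (b : ℝ) (hb : 0 < b)
    (hcrit : HasDerivAt (fun b' => effLoss d₀ σ v a c D b' γ) 0 b) :
    b ≤ (Real.sqrt (∑ i, (v i) ^ 2) /
        ((d₀ : ℝ) * (σ ^ 2 + (d₀ : ℝ)) ^ D * ⨅ i, a i)) ^ ((1 : ℝ) / ((D : ℝ) + 1)) :=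
  deep_critical_point_upper_bound_general hn d₀ hd₀ σ v a ha c D hD γ hγ b hb hcrit
end

section
/- Let A, B, C > 0 and let D ≥ 2 be an integer. For γ > 0 define f_γ(b) = A b^{2D+2} − B b^{D+1} + γ C b² for b ≥ 0. Then: (i) for every γ > 0, b = 0 is a strict local minimum of f_γ on [0, ∞); and (ii) there exists γ̄ > 0 such that for 0 < γ < γ̄ the infimum of f_γ over b ≥ 0 is negative and attained at some b > 0, while for γ > γ̄ one has f_γ(b) > 0 = f_γ(0) for all b > 0. Hence the mean-field deep-network loss with D ≥ 2 exhibits a first-order transition in γ. -/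
/-!
Write `f_γ(b) = b² (γC − h(b))` with `h(b) = B b^{D-1} − A b^{2D}`. Since `D ≥ 2`, `h`
vanishes at `0`, is positive just to the right of `0` and is nonpositive for large `b`, so it
attains a positive maximum `M` on `[0, ∞)`. Near `0` the factor `γC − h(b)` is close to
`γC > 0`, which gives the strict local minimum. The threshold is `γ̄ = M / C`: above it
`γC − h > 0` everywhere, while below it `f_γ` is negative at the maximiser of `h` and
nonnegative for large `b`, so its infimum over `[0, ∞)` is negative and attained.
-/

open Set Filter Topology

theorem eventually_cocompact_inf_principal_Ici {p : ℝ → Prop} {a R : ℝ}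
    (hR : ∀ x, R ≤ x → p x) : ∀ᶠ x in cocompact ℝ ⊓ 𝓟 (Ici a), p x := by
  refine eventually_inf_principal.2 ?_
  filter_upwards [(isCompact_Icc (a := a) (b := R)).compl_mem_cocompact] with x hx hxa
  exact hR x (le_of_not_ge fun hxR => hx ⟨hxa, hxR⟩)

section Transition

variable {h : ℝ → ℝ} {t : ℝ}

theorem exists_sq_mul_sub_pos_of_continuousAt (hc : ContinuousAt h 0) (h0 : h 0 = 0)
    (ht : 0 < t) : ∃ δ > 0, ∀ b : ℝ, 0 < b → b < δ → 0 < b ^ 2 * (t - h b) := by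
  have hlt : ∀ᶠ b in 𝓝 0, h b < t := hc.eventually (gt_mem_nhds (by rwa [h0]))
  obtain ⟨δ, hδ, hball⟩ := Metric.eventually_nhds_iff.1 hlt
  refine ⟨δ, hδ, fun b hb hbδ => mul_pos (by positivity) (sub_pos.2 (hball ?_))⟩
  rwa [Real.dist_eq, sub_zero, abs_of_pos hb]

theorem sq_mul_sub_pos_of_isMaxOn {c b : ℝ} (hmax : IsMaxOn h (Ici 0) c) (ht : h c < t)
    (hb : 0 < b) : 0 < b ^ 2 * (t - h b) :=
  mul_pos (by positivity) (sub_pos.2 ((hmax hb.le).trans_lt ht))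

theorem exists_neg_isMinOn_sq_mul_sub (hcont : Continuous h) (h0 : h 0 = 0) {R c : ℝ}
    (hR : ∀ b, R ≤ b → h b ≤ 0) (hc : 0 ≤ c) (ht : 0 ≤ t) (htc : t < h c) :
    ∃ b > 0, b ^ 2 * (t - h b) < 0 ∧ IsMinOn (fun b => b ^ 2 * (t - h b)) (Ici 0) b := by
  have hc0 : c ≠ 0 := by rintro rfl; linarith
  have hfc : c ^ 2 * (t - h c) < 0 := mul_neg_of_pos_of_neg (by positivity) (by linarith)
  obtain ⟨b, hb, hmin⟩ := (by fun_prop : Continuous fun b => b ^ 2 * (t - h b)).continuousOn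
    |>.exists_isMinOn' isClosed_Ici (x₀ := 0) self_mem_Ici
      (eventually_cocompact_inf_principal_Ici fun b hRb => by
        simpa [h0] using mul_nonneg (sq_nonneg b) (sub_nonneg.2 ((hR b hRb).trans ht)))
  have hfb : b ^ 2 * (t - h b) < 0 := (hmin hc).trans_lt hfc
  have hb0 : b ≠ 0 := by rintro rfl; simp at hfb
  exact ⟨b, lt_of_le_of_ne hb (Ne.symm hb0), hfb, hmin⟩

end Transition

section PowerDifference

variable {A B : ℝ} {p q : ℕ}

theorem exists_forall_ge_mul_pow_sub_mul_pow_nonpos (hA : 0 < A) (hpq : p < q) :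
    ∃ R, ∀ b : ℝ, R ≤ b → B * b ^ p - A * b ^ q ≤ 0 := by
  refine ⟨max 1 (B / A), fun b hb => sub_nonpos.2 ?_⟩
  have hb1 : 1 ≤ b := (le_max_left _ _).trans hb
  have hBA : B ≤ A * b := (div_le_iff₀' hA).1 ((le_max_right _ _).trans hb)
  calc B * b ^ p ≤ A * b * b ^ p := by gcongr
    _ = A * b ^ (p + 1) := by ring
    _ ≤ A * b ^ q := by gcongr; exact hpq

theorem exists_pos_mul_pow_sub_mul_pow_pos (hB : 0 < B) (hpq : p < q) :
    ∃ b > 0, 0 < B * b ^ p - A * b ^ q := by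
  have hlim : Tendsto (fun b : ℝ => B - A * b ^ (q - p)) (𝓝[>] 0) (𝓝 B) := by
    simpa [zero_pow (Nat.sub_ne_zero_of_lt hpq)] using
      ((by fun_prop : Continuous fun b : ℝ => B - A * b ^ (q - p)).tendsto 0).mono_left
        nhdsWithin_le_nhds
  obtain ⟨b, hb, hBb⟩ :=
    (eventually_mem_nhdsWithin.and (hlim.eventually (lt_mem_nhds hB))).exists
  refine ⟨b, hb, ?_⟩
  calc (0 : ℝ) < b ^ p * (B - A * b ^ (q - p)) := mul_pos (pow_pos hb p) hBb
    _ = B * b ^ p - A * b ^ q := by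
      rw [mul_sub, mul_left_comm, ← pow_add, Nat.add_sub_cancel' hpq.le]
      ring

end PowerDifference

/-- for the mean-field deep-network loss f_γ(b) = A b^{2D+2} − B b^{D+1} + γ C b²
with A, B, C > 0 and D ≥ 2: (i) for every γ > 0, b = 0 is a strict local minimum of f_γ on
[0, ∞); (ii) there is γ̄ > 0 such that for 0 < γ < γ̄ the infimum of f_γ over b ≥ 0 is
negative and attained at some b > 0, while for γ > γ̄ one has f_γ(b) > 0 = f_γ(0) for all
b > 0: a first-order transition in γ. -/
theorem mean_field_first_order_transition (A B C : ℝ) (hA : 0 < A) (hB : 0 < B)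
    (hC : 0 < C) (D : ℕ) (hD : 2 ≤ D) :
    (∀ γ : ℝ, 0 < γ → ∃ δ > 0, ∀ b : ℝ, 0 < b → b < δ →
      0 < A * b ^ (2 * D + 2) - B * b ^ (D + 1) + γ * C * b ^ 2) ∧
    ∃ γbar : ℝ, 0 < γbar ∧
      (∀ γ : ℝ, 0 < γ → γ < γbar → ∃ b : ℝ, 0 < b ∧
        A * b ^ (2 * D + 2) - B * b ^ (D + 1) + γ * C * b ^ 2 < 0 ∧
        ∀ b' : ℝ, 0 ≤ b' →
          A * b ^ (2 * D + 2) - B * b ^ (D + 1) + γ * C * b ^ 2 ≤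
            A * b' ^ (2 * D + 2) - B * b' ^ (D + 1) + γ * C * b' ^ 2) ∧
      (∀ γ : ℝ, γbar < γ → ∀ b : ℝ, 0 < b →
        0 < A * b ^ (2 * D + 2) - B * b ^ (D + 1) + γ * C * b ^ 2) := by
  set h : ℝ → ℝ := fun b => B * b ^ (D - 1) - A * b ^ (2 * D) with hh
  have hloss : ∀ γ b : ℝ, A * b ^ (2 * D + 2) - B * b ^ (D + 1) + γ * C * b ^ 2 =
      b ^ 2 * (γ * C - h b) := by
    obtain ⟨n, rfl⟩ : ∃ n, D = n + 1 := ⟨D - 1, by omega⟩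
    intro γ b
    simp only [hh, Nat.add_sub_cancel]
    ring
  have hcont : Continuous h := by fun_prop
  have h0 : h 0 = 0 := by
    simp [hh, zero_pow (by omega : D - 1 ≠ 0), zero_pow (by omega : 2 * D ≠ 0)]
  have hpq : D - 1 < 2 * D := by omega
  obtain ⟨R, hR⟩ := exists_forall_ge_mul_pow_sub_mul_pow_nonpos (B := B) hA hpq
  obtain ⟨c, hc, hcmax⟩ :=
    hcont.continuousOn.exists_isMaxOn' isClosed_Ici (x₀ := 0) self_mem_Ici
    (eventually_cocompact_inf_principal_Ici fun b hb => (hR b hb).trans_eq h0.symm)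
  obtain ⟨b₀, hb₀, hhb₀⟩ := exists_pos_mul_pow_sub_mul_pow_pos (A := A) hB hpq
  have hcpos : 0 < h c := hhb₀.trans_le (hcmax hb₀.le)
  simp only [hloss]
  refine ⟨fun γ hγ =>
      exists_sq_mul_sub_pos_of_continuousAt hcont.continuousAt h0 (by positivity),
    h c / C, by positivity, fun γ hγ hγc => ?_,
    fun γ hγc b hb => sq_mul_sub_pos_of_isMaxOn hcmax ((div_lt_iff₀ hC).1 hγc) hb⟩
  obtain ⟨b, hb, hneg, hmin⟩ :=
    exists_neg_isMinOn_sq_mul_sub hcont h0 hR hc (by positivity) ((lt_div_iff₀ hC).1 hγc)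
  exact ⟨b, hb, hneg, fun b' hb' => hmin hb'⟩
end
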